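/- arXiv:2211.06999 — 10 statements merged into one kernel-verified Lean document; each statement's English description precedes it below -/
import Mathlib

section
/- Banded raising expansion (Proposition 2.1, part 2): For every natural number n, the polynomial identity p n = ∑_{k ∈ Finset.Icc (n − d) n} (∫ (p n).eval t * (q k).eval t * φ.eval t ∂μ) • (q k) holds (with truncated subtraction n − d in ℕ). That is, each μ-orthonormal polynomial p_n is a linear combination of the (φ·μ)-orthonormal polynomials q_{n−d}, …, q_n with coefficients r_{k,n} = ⟨p_n(w), p_k(φw)⟩_{φw}. -/
open MeasureTheory Polynomial

/-!
Write `⟨P, Q⟩_w = ∫ P Q w dμ`. Since `deg p n = n`, expanding `p n` in the `⟨·,·⟩_φ`-orthonormal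
family `q` needs only `q 0, …, q n`, with coefficients `⟨p n, q k⟩_φ = ⟨p n, q k * φ⟩_1`. For
`k + d < n` the polynomial `q k * φ` has degree `< n`, so it lies in the span of `p 0, …, p (n-1)`
and is orthogonal to `p n`. All of this only uses linearity of `P ↦ ∫ P dμ` on polynomials.
-/

namespace Polynomial

variable {K : Type*} [Field K] {f : ℕ → K[X]}

theorem mem_span_image_Iio_of_degree_lt (hf : ∀ k, (f k).degree = k) {m : ℕ} {r : K[X]}
    (hr : r.degree < m) : r ∈ Submodule.span K (f '' Set.Iio m) := by
  let S : Sequence K := ⟨f, hf⟩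
  rw [S.span_degreeLT fun i _ => isUnit_iff_ne_zero.mpr (leadingCoeff_ne_zero.mpr (S.ne_zero i)),
    mem_degreeLT]
  exact hr

variable {L : K[X] →ₗ[K] K}

theorem map_mul_eq_zero_of_degree_lt (hf : ∀ k, (f k).degree = k)
    (horth : ∀ i j, L (f i * f j) = if i = j then 1 else 0) {n : ℕ} {r : K[X]}
    (hr : r.degree < n) :
    L (f n * r) = 0 := by
  have hspan :
      Submodule.span K (f '' Set.Iio n) ≤ LinearMap.ker (L ∘ₗ LinearMap.mulLeft K (f n)) := by
    rw [Submodule.span_le]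
    rintro _ ⟨j, hj, rfl⟩
    simp [horth, (Set.mem_Iio.mp hj).ne']
  exact hspan (mem_span_image_Iio_of_degree_lt hf hr)

theorem eq_sum_map_mul_smul_of_degree_lt (hf : ∀ k, (f k).degree = k)
    (horth : ∀ i j, L (f i * f j) = if i = j then 1 else 0) {m : ℕ} {r : K[X]}
    (hr : r.degree < m) :
    r = ∑ k ∈ Finset.range m, L (r * f k) • f k := by
  let expand : K[X] →ₗ[K] K[X] :=
    ∑ k ∈ Finset.range m, (L ∘ₗ LinearMap.mulRight K (f k)).smulRight (f k)
  have hgen : Set.EqOn (LinearMap.id (R := K)) expand (f '' Set.Iio m) := by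
    rintro _ ⟨j, hj, rfl⟩
    simp [expand, horth, Set.mem_Iio.mp hj]
  simpa [expand] using LinearMap.eqOn_span hgen (mem_span_image_Iio_of_degree_lt hf hr)

end Polynomial

@[simps]
noncomputable def momentFunctional (μ : Measure ℝ)
    (hint : ∀ P : ℝ[X], Integrable (fun t => P.eval t) μ) : ℝ[X] →ₗ[ℝ] ℝ where
  toFun P := ∫ t, P.eval t ∂μ
  map_add' P Q := by simp only [eval_add]; exact integral_add (hint P) (hint Q)
  map_smul' c P := by simp only [eval_smul, smul_eq_mul]; exact integral_const_mul c _

/-- Banded raising expansion: `p n` is a linear combination of `q (n-d), …, q n`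
with coefficients the raising-matrix entries. -/
theorem raising_expansion
    (μ : Measure ℝ)
    (hint : ∀ P : Polynomial ℝ, Integrable (fun t => P.eval t) μ)
    (d : ℕ) (φ : Polynomial ℝ) (hφ : φ.degree = d)
    (p q : ℕ → Polynomial ℝ)
    (hpdeg : ∀ n, (p n).degree = n)
    (hqdeg : ∀ n, (q n).degree = n)
    (hp : ∀ i j, (∫ t, (p i).eval t * (p j).eval t ∂μ) = if i = j then 1 else 0)
    (hq : ∀ i j, (∫ t, (q i).eval t * (q j).eval t * φ.eval t ∂μ) = if i = j then 1 else 0)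
    (n : ℕ) :
    p n = ∑ k ∈ Finset.Icc (n - d) n,
      (∫ t, (p n).eval t * (q k).eval t * φ.eval t ∂μ) • q k := by
  set L := momentFunctional μ hint
  set Lφ := L ∘ₗ LinearMap.mulRight ℝ φ
  have hpL : ∀ i j, L (p i * p j) = if i = j then 1 else 0 := by
    simpa [L, momentFunctional_apply] using hp
  have hqL : ∀ i j, Lφ (q i * q j) = if i = j then 1 else 0 := by
    simpa [Lφ, L, momentFunctional_apply] using hq
  have hcoeff : ∀ k, Lφ (p n * q k) = ∫ t, (p n).eval t * (q k).eval t * φ.eval t ∂μ := by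
    simp [Lφ, L, momentFunctional_apply]
  have hlow :
      ∀ k ∈ Finset.range (n + 1), k ∉ Finset.Icc (n - d) n → Lφ (p n * q k) • q k = 0 := by
    intro k hk hkd
    have hdeg : (q k * φ).degree < n := by
      rw [degree_mul, hqdeg, hφ]
      simp only [Finset.mem_range, Finset.mem_Icc, not_and_or, not_le] at hk hkd
      exact_mod_cast (by omega : k + d < n)
    simp [Lφ, mul_assoc, map_mul_eq_zero_of_degree_lt hpdeg hpL hdeg]
  calc p n = ∑ k ∈ Finset.range (n + 1), Lφ (p n * q k) • q k :=
        eq_sum_map_mul_smul_of_degree_lt hqdeg hqL (by rw [hpdeg]; exact_mod_cast n.lt_succ_self)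
    _ = ∑ k ∈ Finset.Icc (n - d) n, Lφ (p n * q k) • q k :=
        (Finset.sum_subset (fun k hk => by
          simp only [Finset.mem_Icc, Finset.mem_range] at hk ⊢; omega) hlow).symm
    _ = _ := by simp_rw [hcoeff]
end

section
/- Dimension formula for the degree filtration of the coordinate ring of the curve y^m = φ(x) (algebraic core of Proposition 3.1, dim 𝒱_n(γ_{m,d}, w) = min{n+1, max{d,m}}): Let m = 1 or m = 2 and let d ≥ 1. For each natural number n, let F n be the submodule of the quotient R ⧸ I_m obtained as the image, under the quotient map, of the ℝ-submodule of R consisting of polynomials of total degree at most n. Then Module.finrank ℝ (F n) = ∑_{ℓ=0}^{n} min (ℓ + 1) (max d m). In particular, the dimension of the degree-n part F n / F (n−1) equals min{n+1, max{d,m}}. -/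
/-!
Modulo `y^m - φ(x)` one can rewrite `x^d` (when `m ≤ d`, dividing by the leading coefficient of
`φ`) or `y^m` (when `d < m`) through monomials of no larger total degree, so `F n` is spanned by
the classes of `x^i y^j` with `i + j ≤ n` and `i < d`, resp. `j < m`; there are
`min (ℓ + 1) (max d m)` of them in each total degree `ℓ`. They are linearly independent: the
coordinate ring maps to `K[X][Y] ⧸ (Y^m - φ)`, which is free over `K[X]` on `1, Y, …, Y^(m-1)`,
and substituting `X ↦ X^m`, `Y ↦ X` in the reduced representative sends `x^i y^j` to
`X^(m i) φ(X^m)^(j / m) X^(j % m)`. These images have pairwise distinct degrees.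
-/

open Polynomial Finset

theorem Polynomial.linearIndependent_of_injective_natDegree {K ι : Type*} [Field K]
    {v : ι → K[X]} (hv : ∀ i, v i ≠ 0) (hinj : Function.Injective fun i => (v i).natDegree) :
    LinearIndependent K v := by
  refine linearIndependent_iff'.mpr fun s g hsum i hi => ?_
  have hdeg : ∀ j, g j • v j ≠ 0 → (g j • v j).degree = (v j).natDegree := fun j hj => by
    rw [smul_eq_C_mul, degree_C_mul (left_ne_zero_of_smul hj), degree_eq_natDegree (hv j)]
  have hsup := degree_sum_eq_of_disjoint (fun j => g j • v j) s fun j hj k hk hjk => by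
    simp only [Function.onFun, Function.comp_apply, hdeg j hj.2, hdeg k hk.2]
    exact_mod_cast hinj.ne hjk
  rw [hsum, degree_zero, eq_comm, Finset.sup_eq_bot_iff] at hsup
  simpa [hv i] using hsup i hi

namespace Superelliptic

def boundedExponents (n a b : ℕ) : Finset (ℕ × ℕ) :=
  (range a ×ˢ range b).filter fun p => p.1 + p.2 ≤ n

@[simp]
lemma mem_boundedExponents {n a b : ℕ} {p : ℕ × ℕ} :
    p ∈ boundedExponents n a b ↔ p.1 < a ∧ p.2 < b ∧ p.1 + p.2 ≤ n := by
  simp [boundedExponents, and_assoc]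

lemma card_boundedExponents_left (n a : ℕ) :
    #(boundedExponents n a (n + 1)) = ∑ ℓ ∈ range (n + 1), min (ℓ + 1) a := by
  have hsum : ∑ ℓ ∈ range (n + 1), min (ℓ + 1) a =
      #((range (n + 1)).sigma fun ℓ => range (min (ℓ + 1) a)) := by simp
  rw [hsum]
  refine card_nbij' (fun p => ⟨p.1 + p.2, p.1⟩) (fun q => (q.2, q.1 - q.2)) ?_ ?_ ?_ ?_ <;>
    intro p hp <;> simp [Sigma.ext_iff] at hp ⊢ <;> omega

lemma card_boundedExponents_right (n b : ℕ) :
    #(boundedExponents n (n + 1) b) = ∑ ℓ ∈ range (n + 1), min (ℓ + 1) b := by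
  rw [← card_boundedExponents_left]
  refine card_nbij' Prod.swap Prod.swap ?_ ?_ ?_ ?_ <;> intro p hp <;> simp at hp ⊢ <;> omega

noncomputable section

variable {K : Type*} [Field K] (m : ℕ) (φ : K[X])

abbrev curveIdeal : Ideal (MvPolynomial (Fin 2) K) :=
  Ideal.span {MvPolynomial.X 1 ^ m - aeval (MvPolynomial.X 0) φ}

abbrev CoordinateRing := MvPolynomial (Fin 2) K ⧸ curveIdeal m φ

def degreeFiltration (n : ℕ) : Submodule K (CoordinateRing m φ) :=
  (MvPolynomial.restrictTotalDegree (Fin 2) K n).map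
    (Ideal.Quotient.mkₐ K (curveIdeal m φ)).toLinearMap

def monomialXY (p : ℕ × ℕ) : MvPolynomial (Fin 2) K :=
  MvPolynomial.X 0 ^ p.1 * MvPolynomial.X 1 ^ p.2

def curveMonomial (p : ℕ × ℕ) : CoordinateRing m φ :=
  Ideal.Quotient.mkₐ K (curveIdeal m φ) (monomialXY p)

lemma monomial_one_eq_monomialXY (s : Fin 2 →₀ ℕ) :
    MvPolynomial.monomial s (1 : K) = monomialXY (s 0, s 1) := by
  simp [MvPolynomial.monomial_eq, Finsupp.prod_fintype, Fin.prod_univ_two, monomialXY]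

lemma degreeFiltration_eq_span (n : ℕ) :
    degreeFiltration m φ n = Submodule.span K (curveMonomial m φ '' {p | p.1 + p.2 ≤ n}) := by
  rw [degreeFiltration, MvPolynomial.restrictTotalDegree, MvPolynomial.restrictSupport_eq_span,
    Submodule.map_span, Set.image_image]
  have hdeg (s : Fin 2 →₀ ℕ) : (s.sum fun _ e => e) = s 0 + s 1 := by
    rw [Finsupp.sum_fintype _ _ fun _ => rfl, Fin.sum_univ_two]
  congr 1
  ext q
  simp only [Set.mem_image, Set.mem_ofPred_eq, AlgHom.toLinearMap_apply,
    monomial_one_eq_monomialXY, hdeg]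
  constructor
  · rintro ⟨s, hs, rfl⟩
    exact ⟨(s 0, s 1), hs, rfl⟩
  · rintro ⟨p, hp, rfl⟩
    refine ⟨Finsupp.single 0 p.1 + Finsupp.single 1 p.2, by simpa using hp, ?_⟩
    simp [curveMonomial]

lemma curveMonomial_add_snd (i j : ℕ) :
    curveMonomial m φ (i, j + m) =
      ∑ e ∈ range (φ.natDegree + 1), φ.coeff e • curveMonomial m φ (i + e, j) := by
  have hy : Ideal.Quotient.mkₐ K (curveIdeal m φ) (MvPolynomial.X 1 ^ m) =
      Ideal.Quotient.mkₐ K (curveIdeal m φ) (aeval (MvPolynomial.X 0) φ) := by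
    rw [Ideal.Quotient.mkₐ_eq_mk, Ideal.Quotient.eq]
    exact Ideal.subset_span rfl
  have hsplit : (monomialXY (i, j + m) : MvPolynomial (Fin 2) K) =
      monomialXY (i, j) * MvPolynomial.X 1 ^ m := by
    simp only [monomialXY, pow_add]; ring
  rw [curveMonomial, hsplit, map_mul, hy, ← map_mul, aeval_eq_sum_range, Finset.mul_sum, map_sum]
  refine Finset.sum_congr rfl fun e _ => ?_
  rw [mul_smul_comm, map_smul, curveMonomial]
  congr 2
  simp only [monomialXY, pow_add]; ring

variable {m φ}

lemma curveMonomial_mem_span_of_le (hd : 0 < φ.natDegree) (hmd : m ≤ φ.natDegree) {n : ℕ}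
    (p : ℕ × ℕ) (hp : p.1 + p.2 ≤ n) :
    curveMonomial m φ p ∈
      Submodule.span K (curveMonomial m φ '' boundedExponents n φ.natDegree (n + 1)) := by
  obtain ⟨i, j⟩ := p
  induction i using Nat.strong_induction_on generalizing j with
  | _ i ih =>
  rcases lt_or_ge i φ.natDegree with hi | hi
  · exact Submodule.subset_span ⟨(i, j), by simp at hp ⊢; omega, rfl⟩
  obtain ⟨k, rfl⟩ := Nat.exists_eq_add_of_le' hi
  have hc : φ.leadingCoeff ≠ 0 := leadingCoeff_ne_zero.mpr (ne_zero_of_natDegree_gt hd)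
  have hrel := curveMonomial_add_snd m φ k j
  rw [Finset.sum_range_succ, eq_comm, ← eq_sub_iff_add_eq', ← leadingCoeff] at hrel
  rw [← inv_smul_smul₀ hc (curveMonomial m φ _), hrel]
  refine Submodule.smul_mem _ _ (sub_mem (ih k (by omega) _ (by simp at hp ⊢; omega)) ?_)
  refine Submodule.sum_mem _ fun e he => Submodule.smul_mem _ _ (ih _ ?_ _ ?_) <;>
    simp at hp he ⊢ <;> omega

lemma curveMonomial_mem_span_of_lt (hdm : φ.natDegree < m) {n : ℕ}
    (p : ℕ × ℕ) (hp : p.1 + p.2 ≤ n) :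
    curveMonomial m φ p ∈
      Submodule.span K (curveMonomial m φ '' boundedExponents n (n + 1) m) := by
  obtain ⟨i, j⟩ := p
  induction j using Nat.strong_induction_on generalizing i with
  | _ j ih =>
  rcases lt_or_ge j m with hj | hj
  · exact Submodule.subset_span ⟨(i, j), by simp at hp ⊢; omega, rfl⟩
  obtain ⟨l, rfl⟩ := Nat.exists_eq_add_of_le' hj
  rw [curveMonomial_add_snd]
  refine Submodule.sum_mem _ fun e he => Submodule.smul_mem _ _ (ih l (by omega) _ ?_)
  simp at hp he ⊢; omega

variable (m φ)

abbrev curvePolynomial : K[X][X] := X ^ m - C φ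

lemma root_pow_eq_of : AdjoinRoot.root (curvePolynomial m φ) ^ m = AdjoinRoot.of _ φ := by
  have h := AdjoinRoot.mk_self (f := curvePolynomial m φ)
  rwa [map_sub, sub_eq_zero, map_pow, AdjoinRoot.mk_X, AdjoinRoot.mk_C] at h

def toAdjoinRoot : CoordinateRing m φ →ₐ[K] AdjoinRoot (curvePolynomial m φ) :=
  Ideal.Quotient.liftₐ _ (MvPolynomial.aeval ![AdjoinRoot.of _ X, AdjoinRoot.root _])
    fun a ha => by
      obtain ⟨r, rfl⟩ := Ideal.mem_span_singleton'.mp ha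
      have haeval : aeval (AdjoinRoot.of (curvePolynomial m φ) X) φ = AdjoinRoot.of _ φ := by
        rw [← AdjoinRoot.algebraMap_eq, aeval_algebraMap_apply, aeval_X_left_apply]
      simp only [map_mul, map_sub, map_pow, ← aeval_algHom_apply, MvPolynomial.aeval_X,
        Matrix.cons_val_zero, Matrix.cons_val_one, Matrix.cons_val_fin_one, root_pow_eq_of,
        haeval, sub_self, mul_zero]

lemma toAdjoinRoot_curveMonomial (p : ℕ × ℕ) :
    toAdjoinRoot m φ (curveMonomial m φ p) =
      AdjoinRoot.mk _ (C (X ^ p.1 * φ ^ (p.2 / m)) * X ^ (p.2 % m)) := by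
  have hroot : AdjoinRoot.root (curvePolynomial m φ) ^ p.2 =
      AdjoinRoot.of _ (φ ^ (p.2 / m)) * AdjoinRoot.root _ ^ (p.2 % m) := by
    conv_lhs => rw [← Nat.div_add_mod p.2 m, pow_add, pow_mul, root_pow_eq_of, ← map_pow]
  rw [curveMonomial, ← AlgHom.comp_apply, toAdjoinRoot, Ideal.Quotient.liftₐ_comp]
  simp [monomialXY, hroot, mul_assoc]

def curveLinearMap (hm : 0 < m) : CoordinateRing m φ →ₗ[K] K[X] :=
  (eval₂AlgHom (expand K m) X fun _ => Commute.all _ _).toLinearMap ∘ₗ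
    ((AdjoinRoot.modByMonicHom (monic_X_pow_sub_C φ hm.ne')).restrictScalars K) ∘ₗ
    (toAdjoinRoot m φ).toLinearMap

lemma curveLinearMap_curveMonomial (hm : 0 < m) (p : ℕ × ℕ) :
    curveLinearMap m φ hm (curveMonomial m φ p) =
      expand K m (X ^ p.1 * φ ^ (p.2 / m)) * X ^ (p.2 % m) := by
  have hdeg :
      (C (X ^ p.1 * φ ^ (p.2 / m)) * X ^ (p.2 % m)).degree < (curvePolynomial m φ).degree :=
    (degree_C_mul_X_pow_le _ _).trans_lt
      (by rw [degree_X_pow_sub_C hm]; exact_mod_cast Nat.mod_lt _ hm)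
  rw [curveLinearMap, LinearMap.comp_apply, LinearMap.comp_apply, AlgHom.toLinearMap_apply,
    AlgHom.toLinearMap_apply, toAdjoinRoot_curveMonomial, LinearMap.restrictScalars_apply,
    AdjoinRoot.modByMonicHom_mk, (modByMonic_eq_self_iff (monic_X_pow_sub_C φ hm.ne')).mpr hdeg]
  simp [eval₂_pow]

def monomialDegree (m d : ℕ) (p : ℕ × ℕ) : ℕ := m * (p.1 + d * (p.2 / m)) + p.2 % m

lemma natDegree_curveLinearMap_curveMonomial (hm : 0 < m) (hφ : φ ≠ 0) (p : ℕ × ℕ) :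
    (curveLinearMap m φ hm (curveMonomial m φ p)).natDegree =
      monomialDegree m φ.natDegree p := by
  have hexp : expand K m φ ≠ 0 := (expand_ne_zero hm).mpr hφ
  rw [curveLinearMap_curveMonomial, map_mul, map_pow, map_pow, expand_X,
    natDegree_mul (by simp [hexp]) (by simp), natDegree_mul (by simp) (by simp [hexp])]
  simp only [natDegree_pow, natDegree_X, mul_one, natDegree_expand, monomialDegree]
  ring

lemma curveLinearMap_curveMonomial_ne_zero (hm : 0 < m) (hφ : φ ≠ 0) (p : ℕ × ℕ) :
    curveLinearMap m φ hm (curveMonomial m φ p) ≠ 0 := by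
  rw [curveLinearMap_curveMonomial]
  exact mul_ne_zero ((expand_ne_zero hm).mpr (mul_ne_zero (by simp) (pow_ne_zero _ hφ))) (by simp)

lemma injOn_monomialDegree_of_fst_lt {m d : ℕ} (hm : 0 < m) :
    Set.InjOn (monomialDegree m d) {p | p.1 < d} := by
  refine Set.LeftInvOn.injOn (f₁' := fun v => (v / m % d, m * (v / m / d) + v % m)) fun p hp => ?_
  simp only [Set.mem_ofPred_eq] at hp
  have hd : 0 < d := by omega
  simp [monomialDegree, Nat.mul_add_div hm, Nat.div_eq_of_lt (Nat.mod_lt _ hm),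
    Nat.add_mul_mod_self_left, Nat.mod_eq_of_lt hp, Nat.add_mul_div_left _ _ hd,
    Nat.div_eq_of_lt hp, Nat.div_add_mod]

lemma injOn_monomialDegree_of_snd_lt {m d : ℕ} :
    Set.InjOn (monomialDegree m d) {p | p.2 < m} := by
  refine Set.LeftInvOn.injOn (f₁' := fun v => (v / m, v % m)) fun p hp => ?_
  simp only [Set.mem_ofPred_eq] at hp
  have hm : 0 < m := by omega
  simp [monomialDegree, Nat.mul_add_div hm, Nat.div_eq_of_lt hp, Nat.mod_eq_of_lt hp]

lemma finrank_span_curveMonomial (hm : 0 < m) (hφ : φ ≠ 0) (S : Finset (ℕ × ℕ))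
    (hS : Set.InjOn (monomialDegree m φ.natDegree) S) :
    Module.finrank K (Submodule.span K (curveMonomial m φ '' S)) = #S := by
  rw [Set.image_eq_range, finrank_span_eq_card]
  · simp
  refine LinearIndependent.of_comp (curveLinearMap m φ hm)
    (linearIndependent_of_injective_natDegree (fun p => ?_) fun p q hpq => ?_)
  · exact curveLinearMap_curveMonomial_ne_zero m φ hm hφ p
  · refine Subtype.ext (hS p.2 q.2 ?_)
    simpa only [Function.comp_apply, natDegree_curveLinearMap_curveMonomial m φ hm hφ] using hpq

lemma degreeFiltration_eq_span_of_forall_mem {n : ℕ} (S : Finset (ℕ × ℕ))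
    (hS : ∀ p ∈ S, p.1 + p.2 ≤ n)
    (hspan : ∀ p : ℕ × ℕ, p.1 + p.2 ≤ n →
      curveMonomial m φ p ∈ Submodule.span K (curveMonomial m φ '' S)) :
    degreeFiltration m φ n = Submodule.span K (curveMonomial m φ '' S) := by
  rw [degreeFiltration_eq_span]
  refine le_antisymm (Submodule.span_le.mpr ?_) (Submodule.span_mono (Set.image_mono hS))
  rintro _ ⟨p, hp, rfl⟩
  exact hspan p hp

variable {m φ}

theorem finrank_degreeFiltration_of_le (hm : 0 < m) (hmd : m ≤ φ.natDegree) (n : ℕ) :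
    Module.finrank K (degreeFiltration m φ n) =
      ∑ ℓ ∈ range (n + 1), min (ℓ + 1) φ.natDegree := by
  have hφ : φ ≠ 0 := ne_zero_of_natDegree_gt (hm.trans_le hmd)
  rw [degreeFiltration_eq_span_of_forall_mem m φ _ (fun p hp => by simp at hp; omega)
      (curveMonomial_mem_span_of_le (hm.trans_le hmd) hmd),
    finrank_span_curveMonomial m φ hm hφ _ ((injOn_monomialDegree_of_fst_lt hm).mono
      fun p hp => by simp at hp ⊢; omega),
    card_boundedExponents_left]

theorem finrank_degreeFiltration_of_lt (hφ : φ ≠ 0) (hdm : φ.natDegree < m) (n : ℕ) :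
    Module.finrank K (degreeFiltration m φ n) = ∑ ℓ ∈ range (n + 1), min (ℓ + 1) m := by
  rw [degreeFiltration_eq_span_of_forall_mem m φ _ (fun p hp => by simp at hp; omega)
      (curveMonomial_mem_span_of_lt hdm),
    finrank_span_curveMonomial m φ (by omega) hφ _ (injOn_monomialDegree_of_snd_lt.mono
      fun p hp => by simp at hp ⊢; omega),
    card_boundedExponents_right]

end

end Superelliptic

theorem finrank_degree_filtration_curve_general
    (d : ℕ) (φ : Polynomial ℝ) (hφ : φ.degree = d)
    (m : ℕ) (hm : m = 1 ∨ m = 2) (n : ℕ) :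
    Module.finrank ℝ
      ((MvPolynomial.restrictTotalDegree (Fin 2) ℝ n).map
        (Ideal.Quotient.mkₐ ℝ (Ideal.span
          {(MvPolynomial.X 1 : MvPolynomial (Fin 2) ℝ) ^ m -
            Polynomial.aeval (MvPolynomial.X 0 : MvPolynomial (Fin 2) ℝ) φ})).toLinearMap)
      = ∑ ℓ ∈ Finset.range (n + 1), min (ℓ + 1) (max d m) := by
  have hφ0 : φ ≠ 0 := fun h => by simp [h] at hφ
  obtain rfl : φ.natDegree = d := natDegree_eq_of_degree_eq_some hφ
  change Module.finrank ℝ (Superelliptic.degreeFiltration m φ n) = _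
  rcases le_or_gt m φ.natDegree with hmd | hdm
  · rw [Superelliptic.finrank_degreeFiltration_of_le (by omega) hmd, max_eq_left hmd]
  · rw [Superelliptic.finrank_degreeFiltration_of_lt hφ0 hdm, max_eq_right hdm.le]

/-- Dimension formula for the degree filtration of the coordinate ring of the
curve `y^m = φ(x)`: the image `F n` in `R ⧸ I_m` of the polynomials of total
degree at most `n` has dimension `∑_{ℓ=0}^{n} min (ℓ+1) (max d m)`. -/
theorem finrank_degree_filtration_curve
    (d : ℕ) (hd : 1 ≤ d) (φ : Polynomial ℝ) (hφ : φ.degree = d)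
    (m : ℕ) (hm : m = 1 ∨ m = 2) (n : ℕ) :
    Module.finrank ℝ
      ((MvPolynomial.restrictTotalDegree (Fin 2) ℝ n).map
        (Ideal.Quotient.mkₐ ℝ (Ideal.span
          {(MvPolynomial.X 1 : MvPolynomial (Fin 2) ℝ) ^ m -
            Polynomial.aeval (MvPolynomial.X 0 : MvPolynomial (Fin 2) ℝ) φ})).toLinearMap)
      = ∑ ℓ ∈ Finset.range (n + 1), min (ℓ + 1) (max d m) :=
  finrank_degree_filtration_curve_general d φ hφ m hm n
end

section
/- Spanning property of the monomial basis ℬ_n(γ_{m,d}) = {x^{d−k} y^{n+k−d}}_{k=1}^{d} for n ≥ d (Proposition 3.1, case (iii), spanning part): Let m = 1 or m = 2, assume m ≤ d and n ≥ d. Then for every F ∈ R with totalDegree F ≤ n, there exist coefficients c : Fin d → ℝ and a polynomial Q ∈ R with totalDegree Q < n such that F − (∑_{k : Fin d} c k • (x^(d − 1 − k) * y^(n + 1 + k − d)) + Q) ∈ I_m. (Here the exponents d−1−k ∈ {0,…,d−1} and n+1+k−d ∈ {n+1−d,…,n} correspond to the monomials x^{d−k} y^{n+k−d}, k = 1,…,d,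 of the paper.) -/
/-!
Modulo `y^m - φ(x)` one has `x^d ≡ σ⁻¹ (y^m - ψ(x))`, where `σ` is the leading coefficient of `φ`
and `deg ψ < d`. So a monomial `x^a y^c` of top degree `a + c = n` with `a ≥ d` is congruent to a
multiple of `x^(a-d) y^(c+m)`, again of degree at most `n` since `m ≤ d`, plus terms of degree
`< n`. Induction on the power of `x` leaves only the top-degree monomials with `a < d`.
-/

open MvPolynomial

namespace MvPolynomial

variable {σ R : Type*} [CommSemiring R]

theorem totalDegree_X_pow_le (i : σ) (a : ℕ) : (X i ^ a : MvPolynomial σ R).totalDegree ≤ a := by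
  rw [X_pow_eq_monomial]
  exact (totalDegree_monomial_le _ _).trans (by simp)

theorem totalDegree_X_pow_mul_X_pow_le (i j : σ) (a c : ℕ) :
    (X i ^ a * X j ^ c : MvPolynomial σ R).totalDegree ≤ a + c :=
  (totalDegree_mul _ _).trans (add_le_add (totalDegree_X_pow_le i a) (totalDegree_X_pow_le j c))

theorem totalDegree_aeval_X_le (i : σ) (p : Polynomial R) :
    (Polynomial.aeval (X i : MvPolynomial σ R) p).totalDegree ≤ p.natDegree := by
  rw [Polynomial.aeval_eq_sum_range]
  refine (totalDegree_finsetSum _ _).trans (Finset.sup_le fun k hk => ?_)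
  exact (totalDegree_smul_le _ _).trans
    ((totalDegree_X_pow_le i k).trans (Nat.lt_succ_iff.mp (Finset.mem_range.mp hk)))

theorem restrictTotalDegree_le_of_X_pow_mul_X_pow_mem {n : ℕ}
    {T : Submodule R (MvPolynomial (Fin 2) R)} (h : ∀ a c, a + c ≤ n → X 0 ^ a * X 1 ^ c ∈ T) :
    restrictTotalDegree (Fin 2) R n ≤ T := by
  rw [restrictTotalDegree, restrictSupport_eq_span, Submodule.span_le]
  rintro _ ⟨s, hs, rfl⟩
  have hmem := h (s 0) (s 1) (by simpa [Finsupp.sum_fintype] using hs)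
  simpa [monomial_eq, Finsupp.prod_fintype, Fin.prod_univ_two] using hmem

end MvPolynomial

noncomputable section MonomialBasis

variable {K : Type*} [Field K]

def topMonomial (d n : ℕ) (k : Fin d) : MvPolynomial (Fin 2) K :=
  X 0 ^ (d - 1 - (k : ℕ)) * X 1 ^ (n + 1 + (k : ℕ) - d)

-- The middle summand is "total degree `< n`" only for `n ≥ 1`: `n - 1` truncates at `0`.
def monomialBasisSpan (d n : ℕ) (I : Ideal (MvPolynomial (Fin 2) K)) :
    Submodule K (MvPolynomial (Fin 2) K) :=
  Submodule.span K (Set.range (topMonomial d n)) ⊔ restrictTotalDegree (Fin 2) K (n - 1) ⊔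
    I.restrictScalars K

theorem X_pow_mul_X_pow_mem_span_topMonomial {d n a c : ℕ} (had : a < d) (hac : a + c = n) :
    X 0 ^ a * X 1 ^ c ∈ Submodule.span K (Set.range (topMonomial (K := K) d n)) := by
  refine Submodule.subset_span ⟨⟨d - 1 - a, by omega⟩, ?_⟩
  simp only [topMonomial]
  congr 2 <;> omega

theorem X_pow_add_natDegree_mul_X_pow_mem {φ : Polynomial K} (hφ : φ ≠ 0) (e c m : ℕ) :
    X 0 ^ (e + φ.natDegree) * X 1 ^ c ∈
      (K ∙ (X 0 ^ e * X 1 ^ (c + m) : MvPolynomial (Fin 2) K)) ⊔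
          restrictTotalDegree (Fin 2) K (e + c + (φ.natDegree - 1)) ⊔
        (Ideal.span {X 1 ^ m - Polynomial.aeval (X 0) φ}).restrictScalars K := by
  set x : MvPolynomial (Fin 2) K := X 0
  set y : MvPolynomial (Fin 2) K := X 1
  set ψ := Polynomial.aeval x φ.eraseLead
  have hσ : φ.leadingCoeff ≠ 0 := Polynomial.leadingCoeff_ne_zero.mpr hφ
  have hsplit : Polynomial.aeval x φ = ψ + C φ.leadingCoeff * x ^ φ.natDegree := by
    conv_lhs => rw [← Polynomial.eraseLead_add_C_mul_X_pow φ]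
    rw [map_add, map_mul, Polynomial.aeval_C, map_pow, Polynomial.aeval_X, algebraMap_eq]
  have hreduce : x ^ (e + φ.natDegree) * y ^ c = φ.leadingCoeff⁻¹ • (x ^ e * y ^ (c + m) -
      x ^ e * y ^ c * ψ - x ^ e * y ^ c * (y ^ m - Polynomial.aeval x φ)) := by
    have hinv : C φ.leadingCoeff⁻¹ * C φ.leadingCoeff = (1 : MvPolynomial (Fin 2) K) := by
      rw [← C_mul, inv_mul_cancel₀ hσ, C_1]
    rw [hsplit, smul_eq_C_mul]
    linear_combination (-(x ^ (e + φ.natDegree) * y ^ c)) * hinv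
  have hlow : x ^ e * y ^ c * ψ ∈ restrictTotalDegree (Fin 2) K (e + c + (φ.natDegree - 1)) := by
    rw [mem_restrictTotalDegree]
    refine (totalDegree_mul _ _).trans (add_le_add (totalDegree_X_pow_mul_X_pow_le 0 1 e c) ?_)
    exact (totalDegree_aeval_X_le 0 _).trans (Polynomial.eraseLead_natDegree_le φ)
  have hrel : x ^ e * y ^ c * (y ^ m - Polynomial.aeval x φ) ∈
      Ideal.span {y ^ m - Polynomial.aeval x φ} :=
    Ideal.mul_mem_left _ _ (Ideal.subset_span rfl)
  rw [hreduce]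
  refine Submodule.smul_mem _ _ (sub_mem (sub_mem ?_ ?_) (Submodule.mem_sup_right hrel))
  · exact Submodule.mem_sup_left (Submodule.mem_sup_left (Submodule.mem_span_singleton_self _))
  · exact Submodule.mem_sup_left (Submodule.mem_sup_right hlow)

theorem X_pow_mul_X_pow_mem_monomialBasisSpan {φ : Polynomial K} {d m n : ℕ}
    (hφ : φ.natDegree = d) (hd : 0 < d) (hmd : m ≤ d) {a c : ℕ} (hac : a + c ≤ n) :
    (X 0 ^ a * X 1 ^ c : MvPolynomial (Fin 2) K) ∈
      monomialBasisSpan d n (Ideal.span {X 1 ^ m - Polynomial.aeval (X 0) φ}) := by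
  induction a using Nat.strong_induction_on generalizing c with
  | _ a ih =>
  rcases hac.lt_or_eq with hlt | htop
  · refine Submodule.mem_sup_left (Submodule.mem_sup_right ?_)
    exact (mem_restrictTotalDegree _ _ _).mpr
      ((totalDegree_X_pow_mul_X_pow_le 0 1 a c).trans (by omega))
  rcases lt_or_ge a d with had | hda
  · exact Submodule.mem_sup_left (Submodule.mem_sup_left
      (X_pow_mul_X_pow_mem_span_topMonomial had htop))
  obtain ⟨e, rfl⟩ := Nat.exists_eq_add_of_le' hda
  have hφ0 : φ ≠ 0 := by rintro rfl; simp at hφ; omega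
  subst hφ
  refine SetLike.le_def.mp (sup_le (sup_le ?_ ?_) le_sup_right)
    (X_pow_add_natDegree_mul_X_pow_mem hφ0 e c m)
  · exact (Submodule.span_singleton_le_iff_mem _ _).mpr (ih e (by omega) (by omega))
  · refine le_sup_left.trans' (le_sup_right.trans' fun p hp => ?_)
    rw [mem_restrictTotalDegree] at hp ⊢
    omega

theorem exists_of_mem_monomialBasisSpan {d n : ℕ} {I : Ideal (MvPolynomial (Fin 2) K)}
    {F : MvPolynomial (Fin 2) K} (hF : F ∈ monomialBasisSpan d n I) :
    ∃ (c : Fin d → K) (Q : MvPolynomial (Fin 2) K), Q.totalDegree ≤ n - 1 ∧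
      F - (∑ k, c k • topMonomial d n k + Q) ∈ I := by
  obtain ⟨_, hsq, r, hr, rfl⟩ := Submodule.mem_sup.mp hF
  obtain ⟨s, hs, Q, hQ, rfl⟩ := Submodule.mem_sup.mp hsq
  obtain ⟨c, rfl⟩ := (Submodule.mem_span_range_iff_exists_fun K).mp hs
  refine ⟨c, Q, (mem_restrictTotalDegree _ _ _).mp hQ, ?_⟩
  simpa using hr

end MonomialBasis

/-- Spanning property of the monomial basis
`ℬ_n(γ_{m,d}) = {x^{d−k} y^{n+k−d}}_{k=1}^{d}` for `n ≥ d`. -/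
theorem monomial_basis_spanning
    (d : ℕ) (φ : Polynomial ℝ) (hφ : φ.degree = d)
    (m : ℕ) (hm : m = 1 ∨ m = 2) (hmd : m ≤ d) (n : ℕ) (hn : d ≤ n)
    (F : MvPolynomial (Fin 2) ℝ) (hF : F.totalDegree ≤ n) :
    ∃ (c : Fin d → ℝ) (Q : MvPolynomial (Fin 2) ℝ), Q.totalDegree < n ∧
      F - (∑ k : Fin d, c k •
          ((MvPolynomial.X 0 : MvPolynomial (Fin 2) ℝ) ^ (d - 1 - (k : ℕ)) *
            (MvPolynomial.X 1 : MvPolynomial (Fin 2) ℝ) ^ (n + 1 + (k : ℕ) - d)) + Q) ∈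
        Ideal.span {(MvPolynomial.X 1 : MvPolynomial (Fin 2) ℝ) ^ m -
          Polynomial.aeval (MvPolynomial.X 0 : MvPolynomial (Fin 2) ℝ) φ} := by
  have hd : 0 < d := by omega
  have hFmem : F ∈ monomialBasisSpan d n (Ideal.span {X 1 ^ m - Polynomial.aeval (X 0) φ}) :=
    restrictTotalDegree_le_of_X_pow_mul_X_pow_mem
      (fun _ _ hac => X_pow_mul_X_pow_mem_monomialBasisSpan
        (Polynomial.natDegree_eq_of_degree_eq_some hφ) hd hmd hac)
      ((mem_restrictTotalDegree _ _ _).mpr hF)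
  obtain ⟨c, Q, hQ, hmem⟩ := exists_of_mem_monomialBasisSpan hFmem
  exact ⟨c, Q, by omega, hmem⟩
end

section
/- Linear independence of the monomial basis ℬ_n(γ_{m,d}) = {x^{d−k} y^{n+k−d}}_{k=1}^{d} modulo lower-degree polynomials, for n ≥ d (Proposition 3.1, case (iii), independence part): Let m = 1 or m = 2, assume m ≤ d and n ≥ d. If c : Fin d → ℝ and Q ∈ R satisfy totalDegree Q < n and (∑_{k : Fin d} c k • (x^(d − 1 − k) * y^(n + 1 + k − d))) − Q ∈ I_m, then c k = 0 for all k. -/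
/-!
Order monomials degree-lexicographically with `x > y`. Since `m ≤ d`, the leading monomial of
`y ^ m - Φ` is `x ^ d`. If `S - Q = P * (y ^ m - Φ)` with `S` homogeneous of degree `n` and
`deg Q < n`, the leading monomial of `S` is that of `P` times `x ^ d`; but every monomial
`x ^ (d - 1 - k) * y ^ (n + 1 + k - d)` of `S` has `x`-degree below `d`. Hence `S = 0`, and its
coefficients vanish because the exponents are pairwise distinct.
-/

open MvPolynomial MonomialOrder Finsupp

namespace MonomialOrder

variable {σ R : Type*} (m : MonomialOrder σ)

theorem degree_le_of_sub_mem_span_singleton [CommRing R] [IsDomain R]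
    {F Q g : MvPolynomial σ R} (hg : g ≠ 0) (hQ : m.degree Q ≺[m] m.degree F)
    (h : F - Q ∈ Ideal.span {g}) :
    m.degree g ≤ m.degree F := by
  obtain ⟨P, hP⟩ := Ideal.mem_span_singleton'.mp h
  have hFQ : m.degree (F - Q) = m.degree F := m.degree_sub_of_lt hQ
  have hP0 : P ≠ 0 := by
    rintro rfl
    rw [← hP, zero_mul, degree_zero] at hFQ
    rw [← hFQ, map_zero] at hQ
    exact not_lt_bot hQ
  rw [← hFQ, ← hP, m.degree_mul hP0 hg]
  exact le_add_self

theorem degree_aeval_X [CommSemiring R] (i : σ) (φ : Polynomial R) :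
    m.degree (Polynomial.aeval (X i) φ : MvPolynomial σ R) = single i φ.natDegree := by
  classical
  have hsum : (Polynomial.aeval (X i) φ : MvPolynomial σ R) =
      ∑ k ∈ Finset.range (φ.natDegree + 1), monomial (single i k) (φ.coeff k) := by
    simp [Polynomial.aeval_eq_sum_range, X_pow_eq_monomial, smul_monomial]
  apply m.toSyn.injective
  apply le_antisymm
  · rw [hsum]
    refine m.degree_sum_le.trans (Finset.sup_le fun k hk => (m.degree_monomial_le _).trans ?_)
    exact m.toSyn_monotone (single_mono (Nat.lt_succ_iff.mp (Finset.mem_range.mp hk)))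
  · rcases eq_or_ne φ 0 with rfl | hφ
    · simp
    refine m.le_degree (MvPolynomial.mem_support_iff.mpr ?_)
    rw [hsum, coeff_sum]
    simpa [coeff_monomial, (single_injective i).eq_iff] using hφ

end MonomialOrder

namespace MvPolynomial

variable {σ R : Type*}

theorem coeff_sum_monomial_of_injective [CommSemiring R] {ι : Type*} [Fintype ι]
    {e : ι → σ →₀ ℕ} (he : e.Injective) (c : ι → R) (k : ι) :
    coeff (e k) (∑ i, monomial (e i) (c i)) = c k := by
  classical
  simp [coeff_sum, coeff_monomial, he.eq_iff]

variable [LinearOrder σ] [WellFoundedGT σ]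

theorem degLex_degree_X_pow_sub_aeval_X [CommRing R] [Nontrivial R] {i j : σ} (hij : i < j)
    {φ : Polynomial R} {k : ℕ} (hk : k ≤ φ.natDegree) (hφ : 0 < φ.natDegree) :
    degLex.degree (X j ^ k - Polynomial.aeval (X i) φ : MvPolynomial σ R) =
      single i φ.natDegree := by
  classical
  rw [← degree_neg, neg_sub, degree_sub_of_lt] <;> rw [degree_aeval_X]
  rw [X_pow_eq_monomial, degree_monomial, if_neg one_ne_zero, degLex_lt_iff, DegLex.lt_iff]
  simp only [ofDegLex_toDegLex, degree_single]
  rcases hk.lt_or_eq with hk | rfl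
  · exact Or.inl hk
  · refine Or.inr ⟨rfl, i, fun l hl => ?_, ?_⟩
    · simp [hl.ne', (hl.trans hij).ne']
    · simp [hij.ne, hφ]

theorem IsHomogeneous.eq_zero_of_sub_mem_span_singleton [CommRing R] [IsDomain R]
    {F Q g : MvPolynomial σ R} {n : ℕ} (hF : F.IsHomogeneous n)
    (hndvd : ∀ b ∈ F.support, ¬ degLex.degree g ≤ b) (hQ : Q.totalDegree < n)
    (h : F - Q ∈ Ideal.span {g}) :
    F = 0 := by
  by_contra hF0
  have hmem := degLex.degree_mem_support hF0
  have hg : g ≠ 0 := by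
    rintro rfl
    exact hndvd _ hmem (by simp)
  have hQF : degLex.degree Q ≺[degLex] degLex.degree F := by
    rw [degLex_lt_iff, DegLex.lt_iff]
    left
    simpa only [ofDegLex_toDegLex, degree_degLexDegree, hF.totalDegree hF0] using hQ
  exact hndvd _ hmem (degLex.degree_le_of_sub_mem_span_singleton hg hQF h)

end MvPolynomial

noncomputable def basisExponent (d n : ℕ) (k : Fin d) : Fin 2 →₀ ℕ :=
  single 0 (d - 1 - k) + single 1 (n + 1 + k - d)

theorem basisExponent_apply_zero (d n : ℕ) (k : Fin d) : basisExponent d n k 0 = d - 1 - k := by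
  simp [basisExponent]

theorem basisExponent_injective (d n : ℕ) : (basisExponent d n).Injective := by
  intro k l hkl
  have := congr($hkl 0)
  rw [basisExponent_apply_zero, basisExponent_apply_zero] at this
  omega

theorem degree_basisExponent {d n : ℕ} (hn : d ≤ n) (k : Fin d) :
    (basisExponent d n k).degree = n := by
  simp only [basisExponent, map_add, degree_single]
  omega

theorem monomial_basisExponent {R : Type*} [CommSemiring R] (d n : ℕ) (k : Fin d) (r : R) :
    monomial (basisExponent d n k) r =
      r • ((X 0 : MvPolynomial (Fin 2) R) ^ (d - 1 - (k : ℕ)) * X 1 ^ (n + 1 + (k : ℕ) - d)) := by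
  simp [basisExponent, X_pow_eq_monomial, monomial_mul, smul_monomial]

theorem monomial_basis_independent_general
    (d : ℕ) (φ : Polynomial ℝ) (hφ : φ.degree = d)
    (m : ℕ) (hmd : m ≤ d) (n : ℕ) (hn : d ≤ n)
    (c : Fin d → ℝ) (Q : MvPolynomial (Fin 2) ℝ) (hQ : Q.totalDegree < n)
    (hmem : (∑ k : Fin d, c k •
        ((MvPolynomial.X 0 : MvPolynomial (Fin 2) ℝ) ^ (d - 1 - (k : ℕ)) *
          (MvPolynomial.X 1 : MvPolynomial (Fin 2) ℝ) ^ (n + 1 + (k : ℕ) - d))) - Q ∈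
      Ideal.span {(MvPolynomial.X 1 : MvPolynomial (Fin 2) ℝ) ^ m -
        Polynomial.aeval (MvPolynomial.X 0 : MvPolynomial (Fin 2) ℝ) φ}) :
    ∀ k, c k = 0 := by
  intro k
  have hφd : φ.natDegree = d := Polynomial.natDegree_eq_of_degree_eq_some hφ
  have hlead := degLex_degree_X_pow_sub_aeval_X (σ := Fin 2) (R := ℝ) Fin.zero_lt_one
    (hφd ▸ hmd) (hφd ▸ k.pos)
  rw [hφd] at hlead
  simp only [← monomial_basisExponent] at hmem
  have hS : ∑ k, monomial (basisExponent d n k) (c k) = 0 := by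
    refine IsHomogeneous.eq_zero_of_sub_mem_span_singleton
      (IsHomogeneous.sum _ _ _ fun k _ => isHomogeneous_monomial _ (degree_basisExponent hn k))
      (fun b hb hle => ?_) hQ hmem
    obtain ⟨j, rfl, -⟩ := by simpa using support_sum hb
    have hx := hle 0
    rw [hlead, single_eq_same, basisExponent_apply_zero] at hx
    omega
  rw [← coeff_sum_monomial_of_injective (basisExponent_injective d n) c k, hS, coeff_zero]

/-- Linear independence of the monomial basis
`ℬ_n(γ_{m,d}) = {x^{d−k} y^{n+k−d}}_{k=1}^{d}` modulo lower-degree polynomials,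
for `n ≥ d`. -/
theorem monomial_basis_independent
    (d : ℕ) (φ : Polynomial ℝ) (hφ : φ.degree = d)
    (m : ℕ) (hm : m = 1 ∨ m = 2) (hmd : m ≤ d) (n : ℕ) (hn : d ≤ n)
    (c : Fin d → ℝ) (Q : MvPolynomial (Fin 2) ℝ) (hQ : Q.totalDegree < n)
    (hmem : (∑ k : Fin d, c k •
        ((MvPolynomial.X 0 : MvPolynomial (Fin 2) ℝ) ^ (d - 1 - (k : ℕ)) *
          (MvPolynomial.X 1 : MvPolynomial (Fin 2) ℝ) ^ (n + 1 + (k : ℕ) - d))) - Q ∈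
      Ideal.span {(MvPolynomial.X 1 : MvPolynomial (Fin 2) ℝ) ^ m -
        Polynomial.aeval (MvPolynomial.X 0 : MvPolynomial (Fin 2) ℝ) φ}) :
    ∀ k, c k = 0 :=
  monomial_basis_independent_general d φ hφ m hmd n hn c Q hQ hmem
end

section
/- Linear independence of the degree-n monomials on the curve in the low-degree regime (Proposition 3.1, case (i)): Let m = 1 or m = 2, let d ≥ 1, and suppose n + 1 ≤ max d m. If c : Fin (n+1) → ℝ and Q ∈ R satisfy (Q = 0 or totalDegree Q < n) and (∑_{k : Fin (n+1)} c k • (x^(n − k) * y^(k : ℕ))) − Q ∈ I_m, then c k = 0 for all k. (Thus the monomials x^{n−k} y^k, k = 0,…,n, are linearly independent modulo I_m and polynomials of total degree less than n.) -/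
/-!
Write `f = y^m - φ(x)` and `P = ∑ c_k x^{n-k} y^k`. Both monomials `y^m` and `x^d` occur in `f`,
so `deg f ≥ max d m > n ≥ deg (P - Q)`. Over a domain total degree is additive, so a nonzero
multiple of `f` has degree at least `deg f`; hence `P - Q = 0`. Comparing the coefficients of the
degree-`n` monomials `x^{n-k} y^k` in `P = Q` gives `c k = 0`.
-/

open Finsupp

namespace MvPolynomial

variable {R σ : Type*}

section CommSemiring

variable [CommSemiring R]

theorem smul_X_pow_mul_X_pow (r : R) (i j : σ) (a b : ℕ) :
    r • (X i ^ a * X j ^ b : MvPolynomial σ R) = monomial (single i a + single j b) r := by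
  rw [X_pow_eq_monomial, X_pow_eq_monomial, monomial_mul, smul_monomial, one_mul, smul_eq_mul,
    mul_one]

theorem coeff_sum_smul_X_pow_mul_X_pow {i j : σ} (hij : i ≠ j) (n : ℕ) (c : Fin (n + 1) → R)
    (k : Fin (n + 1)) :
    coeff (single i (n - k : ℕ) + single j (k : ℕ))
      (∑ l : Fin (n + 1), c l • (X i ^ (n - (l : ℕ)) * X j ^ (l : ℕ))) = c k := by
  classical
  simp only [smul_X_pow_mul_X_pow, coeff_sum, coeff_monomial]
  refine (Finset.sum_eq_single k (fun l _ hlk => if_neg fun h => hlk ?_) (by simp)).trans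
    (if_pos rfl)
  simpa [hij.symm, Fin.ext_iff] using congrArg (· j) h

theorem totalDegree_sum_smul_X_pow_mul_X_pow_le (i j : σ) (n : ℕ) (c : Fin (n + 1) → R) :
    totalDegree (∑ l : Fin (n + 1),
      c l • (X i ^ (n - (l : ℕ)) * X j ^ (l : ℕ) : MvPolynomial σ R)) ≤ n := by
  refine (IsHomogeneous.sum _ _ n fun l _ => ?_).totalDegree_le
  have := ((isHomogeneous_X_pow (R := R) i (n - l)).mul (isHomogeneous_X_pow j l)).C_mul (c l)
  rwa [Nat.sub_add_cancel l.is_le, ← smul_eq_C_mul] at this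

theorem coeff_single_aeval_X_self (i : σ) (φ : Polynomial R) (k : ℕ) :
    coeff (single i k) (Polynomial.aeval (X i : MvPolynomial σ R) φ) = φ.coeff k := by
  classical
  simp [Polynomial.aeval_def, Polynomial.eval₂_eq_sum, Polynomial.sum_def, coeff_sum, coeff_X_pow,
    (single_injective i).eq_iff, eq_comm]

theorem coeff_single_aeval_X_of_ne {i j : σ} (hij : i ≠ j) (φ : Polynomial R) {k : ℕ}
    (hk : k ≠ 0) : coeff (single j k) (Polynomial.aeval (X i : MvPolynomial σ R) φ) = 0 := by
  classical
  simp [Polynomial.aeval_eq_sum_range, coeff_sum, coeff_smul, coeff_X_pow, single_eq_single_iff,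
    hij, hk]

end CommSemiring

theorem max_le_totalDegree_X_pow_sub_aeval_X [CommRing R] [Nontrivial R] {i j : σ} (hij : i ≠ j)
    (m : ℕ) (φ : Polynomial R) :
    max m φ.natDegree ≤ totalDegree (X j ^ m - Polynomial.aeval (X i : MvPolynomial σ R) φ) := by
  classical
  refine max_le ?_ ?_
  · rcases Nat.eq_zero_or_pos m with rfl | hm
    · exact Nat.zero_le _
    refine (le_of_eq ?_).trans (le_totalDegree (s := single j m) ?_)
    · simp
    rw [mem_support_iff, coeff_sub, coeff_single_aeval_X_of_ne hij φ hm.ne', coeff_X_pow]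
    simp
  · rcases Nat.eq_zero_or_pos φ.natDegree with h | hd
    · exact h ▸ Nat.zero_le _
    refine (le_of_eq ?_).trans (le_totalDegree (s := single i φ.natDegree) ?_)
    · simp
    rw [mem_support_iff, coeff_sub, coeff_single_aeval_X_self, coeff_X_pow,
      if_neg (by simp [single_eq_single_iff, hij.symm, hd.ne']), zero_sub, neg_ne_zero]
    exact Polynomial.leadingCoeff_ne_zero.mpr (Polynomial.ne_zero_of_natDegree_gt hd)

theorem eq_zero_of_mem_span_singleton_of_totalDegree_lt [CommRing R] [IsDomain R]
    {p f : MvPolynomial σ R} (hp : p ∈ Ideal.span {f}) (h : p.totalDegree < f.totalDegree) :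
    p = 0 := by
  by_contra hne
  exact h.not_ge (totalDegree_le_of_dvd_of_isDomain (Ideal.mem_span_singleton.mp hp) hne)

end MvPolynomial

open MvPolynomial

theorem monomial_basis_independent_low_degree_general
    (d : ℕ) (φ : Polynomial ℝ) (hφ : φ.degree = d)
    (m : ℕ) (n : ℕ) (hn : n + 1 ≤ max d m)
    (c : Fin (n + 1) → ℝ) (Q : MvPolynomial (Fin 2) ℝ)
    (hQ : Q = 0 ∨ Q.totalDegree < n)
    (hmem : (∑ k : Fin (n + 1), c k •
        ((MvPolynomial.X 0 : MvPolynomial (Fin 2) ℝ) ^ (n - (k : ℕ)) *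
          (MvPolynomial.X 1 : MvPolynomial (Fin 2) ℝ) ^ (k : ℕ))) - Q ∈
      Ideal.span {(MvPolynomial.X 1 : MvPolynomial (Fin 2) ℝ) ^ m -
        Polynomial.aeval (MvPolynomial.X 0 : MvPolynomial (Fin 2) ℝ) φ}) :
    ∀ k, c k = 0 := by
  have hQn : Q.totalDegree ≤ n := by
    rcases hQ with rfl | hQ
    · simp
    · exact hQ.le
  have hdeg : totalDegree (∑ k : Fin (n + 1), c k • (X 0 ^ (n - (k : ℕ)) * X 1 ^ (k : ℕ)) - Q) <
      totalDegree ((X 1 : MvPolynomial (Fin 2) ℝ) ^ m - Polynomial.aeval (X 0) φ) :=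
    calc _ ≤ n := (totalDegree_sub _ _).trans
            (max_le (totalDegree_sum_smul_X_pow_mul_X_pow_le 0 1 n c) hQn)
      _ < max m φ.natDegree := by
            rw [Polynomial.natDegree_eq_of_degree_eq_some hφ, max_comm]; omega
      _ ≤ _ := max_le_totalDegree_X_pow_sub_aeval_X Fin.zero_ne_one m φ
  have hPQ := sub_eq_zero.mp (eq_zero_of_mem_span_singleton_of_totalDegree_lt hmem hdeg)
  intro k
  rw [← coeff_sum_smul_X_pow_mul_X_pow Fin.zero_ne_one n c k, hPQ]
  rcases hQ with rfl | hQ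
  · exact coeff_zero _
  · refine coeff_eq_zero_of_totalDegree_lt ?_
    rwa [← degree_apply, map_add, degree_single, degree_single, Nat.sub_add_cancel k.is_le]

/-- Linear independence of the degree-`n` monomials `x^{n−k} y^k`, `k = 0,…,n`,
on the curve, in the low-degree regime `n + 1 ≤ max d m`. -/
theorem monomial_basis_independent_low_degree
    (d : ℕ) (hd : 1 ≤ d) (φ : Polynomial ℝ) (hφ : φ.degree = d)
    (m : ℕ) (hm : m = 1 ∨ m = 2) (n : ℕ) (hn : n + 1 ≤ max d m)
    (c : Fin (n + 1) → ℝ) (Q : MvPolynomial (Fin 2) ℝ)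
    (hQ : Q = 0 ∨ Q.totalDegree < n)
    (hmem : (∑ k : Fin (n + 1), c k •
        ((MvPolynomial.X 0 : MvPolynomial (Fin 2) ℝ) ^ (n - (k : ℕ)) *
          (MvPolynomial.X 1 : MvPolynomial (Fin 2) ℝ) ^ (k : ℕ))) - Q ∈
      Ideal.span {(MvPolynomial.X 1 : MvPolynomial (Fin 2) ℝ) ^ m -
        Polynomial.aeval (MvPolynomial.X 0 : MvPolynomial (Fin 2) ℝ) φ}) :
    ∀ k, c k = 0 :=
  monomial_basis_independent_low_degree_general d φ hφ m n hn c Q hQ hmem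
end

section
/- Orthonormality of the P-basis on the curve y² = φ(x) (Proposition 3.3, case m = 2): Assume additionally that φ.eval t ≥ 0 for μ-almost every t. Define functions F n, G n : ℝ → ℝ → ℝ by F n u v = (p n).eval u / Real.sqrt 2 and G n u v = v * (q n).eval u / Real.sqrt 2, and define the bilinear pairing B f g = ∫ ( f t (Real.sqrt (φ.eval t)) * g t (Real.sqrt (φ.eval t)) + f t (−Real.sqrt (φ.eval t)) * g t (−Real.sqrt (φ.eval t)) ) ∂μ. Then for all i, j: B (F i) (F j) = (if i = j then 1 else 0), B (G i) (G j) = (if i = j then 1 else 0), and B (F i) (G j) = 0. (These are the P-polynomials P_{n,0} = p_n(w)/√2 and P_{n+1,1} = y·p_n(φw)/√2, orthonormal with respect to ⟨·,·⟩_{γ_{2,d},w}.) -/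
open MeasureTheory

/-!
Over each `t` the curve `v² = φ(t)` has the two points `v = ±√φ(t)`. `F n` is even in `v` and
`G n` is odd, so a mixed product cancels between the two points, while an even product is counted
twice, which compensates the normalisation `1/√2`; for `G` the factor `v²` becomes the weight `φ`.
-/

lemma two_branch_sum_const (a b : ℝ) :
    a / √2 * (b / √2) + a / √2 * (b / √2) = a * b := by
  rw [div_mul_div_comm, Real.mul_self_sqrt zero_le_two]
  ring

lemma two_branch_sum_linear (a b s : ℝ) :
    s * a / √2 * (s * b / √2) + -s * a / √2 * (-s * b / √2) = a * b * (s * s) := by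
  calc s * a / √2 * (s * b / √2) + -s * a / √2 * (-s * b / √2)
      = s * a / √2 * (s * b / √2) + s * a / √2 * (s * b / √2) := by ring
    _ = a * b * (s * s) := by rw [two_branch_sum_const]; ring

lemma two_branch_sum_const_linear (a b s : ℝ) :
    a / √2 * (s * b / √2) + a / √2 * (-s * b / √2) = 0 := by
  ring

theorem P_basis_orthonormal_m2_general
    (μ : Measure ℝ)
    (φ : Polynomial ℝ)
    (p q : ℕ → Polynomial ℝ)
    (hp : ∀ i j, (∫ t, (p i).eval t * (p j).eval t ∂μ) = if i = j then 1 else 0)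
    (hq : ∀ i j, (∫ t, (q i).eval t * (q j).eval t * φ.eval t ∂μ) = if i = j then 1 else 0)
    (hφnn : ∀ᵐ t ∂μ, 0 ≤ φ.eval t)
    (F G : ℕ → ℝ → ℝ → ℝ)
    (hF : ∀ n u v, F n u v = (p n).eval u / Real.sqrt 2)
    (hG : ∀ n u v, G n u v = v * (q n).eval u / Real.sqrt 2)
    (B : (ℝ → ℝ → ℝ) → (ℝ → ℝ → ℝ) → ℝ)
    (hB : ∀ f g : ℝ → ℝ → ℝ, B f g = ∫ t,
      (f t (Real.sqrt (φ.eval t)) * g t (Real.sqrt (φ.eval t)) +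
        f t (-Real.sqrt (φ.eval t)) * g t (-Real.sqrt (φ.eval t))) ∂μ) :
    (∀ i j, B (F i) (F j) = if i = j then 1 else 0) ∧
    (∀ i j, B (G i) (G j) = if i = j then 1 else 0) ∧
    (∀ i j, B (F i) (G j) = 0) := by
  refine ⟨fun i j => ?_, fun i j => ?_, fun i j => ?_⟩
  · simp only [hB, hF, two_branch_sum_const, hp]
  · rw [hB, ← hq i j]
    refine integral_congr_ae (hφnn.mono fun t hφt => ?_)
    simp only [hG, two_branch_sum_linear, Real.mul_self_sqrt hφt]
  · simp only [hB, hF, hG, two_branch_sum_const_linear, integral_zero]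

/-- Orthonormality of the `P`-basis on the curve `y² = φ(x)`:
`P_{n,0} = p_n(w)/√2` and `P_{n+1,1} = y·p_n(φw)/√2` are orthonormal with
respect to the curve inner product. -/
theorem P_basis_orthonormal_m2
    (μ : Measure ℝ)
    (hint : ∀ P : Polynomial ℝ, Integrable (fun t => P.eval t) μ)
    (d : ℕ) (φ : Polynomial ℝ) (hφ : φ.degree = d)
    (p q : ℕ → Polynomial ℝ)
    (hpdeg : ∀ n, (p n).degree = n)
    (hqdeg : ∀ n, (q n).degree = n)
    (hp : ∀ i j, (∫ t, (p i).eval t * (p j).eval t ∂μ) = if i = j then 1 else 0)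
    (hq : ∀ i j, (∫ t, (q i).eval t * (q j).eval t * φ.eval t ∂μ) = if i = j then 1 else 0)
    (hφnn : ∀ᵐ t ∂μ, 0 ≤ φ.eval t)
    (F G : ℕ → ℝ → ℝ → ℝ)
    (hF : ∀ n u v, F n u v = (p n).eval u / Real.sqrt 2)
    (hG : ∀ n u v, G n u v = v * (q n).eval u / Real.sqrt 2)
    (B : (ℝ → ℝ → ℝ) → (ℝ → ℝ → ℝ) → ℝ)
    (hB : ∀ f g : ℝ → ℝ → ℝ, B f g = ∫ t,
      (f t (Real.sqrt (φ.eval t)) * g t (Real.sqrt (φ.eval t)) +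
        f t (-Real.sqrt (φ.eval t)) * g t (-Real.sqrt (φ.eval t))) ∂μ) :
    (∀ i j, B (F i) (F j) = if i = j then 1 else 0) ∧
    (∀ i j, B (G i) (G j) = if i = j then 1 else 0) ∧
    (∀ i j, B (F i) (G j) = 0) :=
  P_basis_orthonormal_m2_general μ φ p q hp hq hφnn F G hF hG B hB
end

section
/- Minimal degrees on quadratic curves y² = φ(x), deg φ ≤ 2 (degree claims underlying Proposition 4.1, case m = 2, d ∈ {1,2}): Suppose 1 ≤ Polynomial.degree φ ≤ 2. Then for every n ≥ 1: (a) every Q ∈ R with x^n − Q ∈ I_2 satisfies n ≤ totalDegree Q; and (b) every Q ∈ R with y * x^(n−1) − Q ∈ I_2 satisfies n ≤ totalDegree Q. Hence the monomials x^n and y·x^{n−1} both have minimal degree exactly n on the curve y² = φ(x). -/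
/-!
Substitute `x ↦ T`, `y ↦ s T`, landing in `R[s][T]`. The `T`-degree of the image of a polynomial
is at most its total degree, and when `deg φ ≤ m` the image of `y^m - φ(x)` has `T`-degree `m`
and leading coefficient `s^m - φ_m`, so the leading coefficient of the image of every element of
`I_m` is divisible by `s^m - φ_m`. If `F` maps to `r(s) T^n` and `F - Q ∈ I_m` with
`totalDegree Q < n`, then the image of `F - Q` has leading coefficient `r`, forcing
`r = 0` or `deg r ≥ m`. For `F = x^n` and `F = y x^(n-1)` we have `r = 1` and `r = s`.
-/

open Polynomial

theorem natDegree_aeval_le_totalDegree {σ R S : Type*} [CommSemiring R] [CommSemiring S]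
    [Algebra R S] {f : σ → S[X]} (hf : ∀ i, (f i).natDegree ≤ 1) (P : MvPolynomial σ R) :
    (MvPolynomial.aeval f P).natDegree ≤ P.totalDegree := by
  conv_lhs => rw [P.as_sum, map_sum]
  refine natDegree_sum_le_of_forall_le _ _ fun v hv => ?_
  rw [MvPolynomial.aeval_monomial, Polynomial.algebraMap_apply]
  calc _ ≤ (C (algebraMap R S (P.coeff v))).natDegree + ∑ i ∈ v.support, (f i ^ v i).natDegree :=
        natDegree_mul_le.trans (Nat.add_le_add_left (natDegree_prod_le _ _) _)
    _ ≤ 0 + ∑ i ∈ v.support, v i := by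
        gcongr with i
        · exact (natDegree_C _).le
        · exact natDegree_pow_le.trans (mul_le_of_le_one_right' (hf i))
    _ ≤ P.totalDegree := (zero_add _).trans_le (MvPolynomial.le_totalDegree hv)

section SlopeSubst

variable (R : Type*) [CommRing R]

noncomputable def slopeSubst : MvPolynomial (Fin 2) R →ₐ[R] R[X][X] :=
  MvPolynomial.aeval ![X, C X * X]

variable {R}

noncomputable def curveEquation (m : ℕ) (φ : R[X]) : MvPolynomial (Fin 2) R :=
  MvPolynomial.X 1 ^ m - aeval (MvPolynomial.X 0) φ

@[simp]
theorem slopeSubst_X_zero : slopeSubst R (MvPolynomial.X 0) = X := by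
  simp [slopeSubst]

@[simp]
theorem slopeSubst_X_one : slopeSubst R (MvPolynomial.X 1) = C X * X := by
  simp [slopeSubst]

theorem natDegree_slopeSubst_le (P : MvPolynomial (Fin 2) R) :
    (slopeSubst R P).natDegree ≤ P.totalDegree :=
  natDegree_aeval_le_totalDegree (fun i => by
    fin_cases i
    exacts [natDegree_X_le, (natDegree_C_mul_le _ _).trans natDegree_X_le]) P

theorem slopeSubst_aeval_X_zero (φ : R[X]) :
    slopeSubst R (aeval (MvPolynomial.X 0) φ) = φ.map C := by
  rw [← aeval_algHom_apply, slopeSubst_X_zero, ← aeval_map_algebraMap R[X], algebraMap_eq,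
    aeval_X_left_apply]

variable [IsDomain R] {m : ℕ} {φ : R[X]}

theorem leadingCoeff_slopeSubst_curveEquation (hm : 0 < m) (hφ : φ.natDegree ≤ m) :
    (slopeSubst R (curveEquation m φ)).leadingCoeff = X ^ m - C (φ.coeff m) := by
  have himage : slopeSubst R (curveEquation m φ) = C (X ^ m) * X ^ m - φ.map C := by
    simp [curveEquation, mul_pow, slopeSubst_aeval_X_zero]
  have hcoeff : (slopeSubst R (curveEquation m φ)).coeff m = X ^ m - C (φ.coeff m) := by
    rw [himage, coeff_sub, coeff_C_mul_X_pow, if_pos rfl, coeff_map]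
  have hdeg : (slopeSubst R (curveEquation m φ)).natDegree ≤ m := by
    rw [himage]
    exact (natDegree_sub_le_of_le (natDegree_C_mul_X_pow_le _ _)
      (natDegree_map_le.trans hφ)).trans_eq (max_self m)
  rw [leadingCoeff, natDegree_eq_of_le_of_coeff_ne_zero hdeg (hcoeff ▸ X_pow_sub_C_ne_zero hm _),
    hcoeff]

theorem X_pow_sub_C_dvd_leadingCoeff_slopeSubst (hm : 0 < m) (hφ : φ.natDegree ≤ m)
    {P : MvPolynomial (Fin 2) R} (hP : P ∈ Ideal.span {curveEquation m φ}) :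
    X ^ m - C (φ.coeff m) ∣ (slopeSubst R P).leadingCoeff := by
  obtain ⟨g, rfl⟩ := Ideal.mem_span_singleton'.mp hP
  rw [map_mul, leadingCoeff_mul, leadingCoeff_slopeSubst_curveEquation hm hφ]
  exact dvd_mul_left _ _

theorem le_totalDegree_of_sub_mem_span_curveEquation (hφ : φ.natDegree ≤ m) {r : R[X]}
    (hr0 : r ≠ 0) (hr : r.natDegree < m) {n : ℕ} {F Q : MvPolynomial (Fin 2) R}
    (hF : slopeSubst R F = C r * X ^ n) (hFQ : F - Q ∈ Ideal.span {curveEquation m φ}) :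
    n ≤ Q.totalDegree := by
  by_contra! hQ
  have hlt : (slopeSubst R Q).degree < (C r * X ^ n).degree := by
    rw [degree_C_mul_X_pow n hr0]
    exact degree_le_natDegree.trans_lt
      (by exact_mod_cast (natDegree_slopeSubst_le Q).trans_lt hQ)
  have hlead : (slopeSubst R (F - Q)).leadingCoeff = r := by
    rw [map_sub, hF, leadingCoeff_sub_of_degree_lt hlt, leadingCoeff_C_mul_X_pow]
  have hdvd := X_pow_sub_C_dvd_leadingCoeff_slopeSubst (by omega) hφ hFQ
  rw [hlead] at hdvd
  have hdeg := natDegree_le_of_dvd hdvd hr0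
  rw [natDegree_X_pow_sub_C] at hdeg
  omega

end SlopeSubst

theorem curve_degree_quadratic_m2_general
    (φ : Polynomial ℝ) (h2 : φ.degree ≤ 2)
    (n : ℕ) :
    (∀ Q : MvPolynomial (Fin 2) ℝ,
      (MvPolynomial.X 0 : MvPolynomial (Fin 2) ℝ) ^ n - Q ∈
        Ideal.span {(MvPolynomial.X 1 : MvPolynomial (Fin 2) ℝ) ^ 2 -
          Polynomial.aeval (MvPolynomial.X 0 : MvPolynomial (Fin 2) ℝ) φ} →
      n ≤ Q.totalDegree) ∧
    (∀ Q : MvPolynomial (Fin 2) ℝ,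
      (MvPolynomial.X 1 : MvPolynomial (Fin 2) ℝ) *
        (MvPolynomial.X 0 : MvPolynomial (Fin 2) ℝ) ^ (n - 1) - Q ∈
        Ideal.span {(MvPolynomial.X 1 : MvPolynomial (Fin 2) ℝ) ^ 2 -
          Polynomial.aeval (MvPolynomial.X 0 : MvPolynomial (Fin 2) ℝ) φ} →
      n ≤ Q.totalDegree) := by
  have hφ : φ.natDegree ≤ 2 := natDegree_le_of_degree_le h2
  refine ⟨fun Q hQ => ?_, fun Q hQ => ?_⟩
  · exact le_totalDegree_of_sub_mem_span_curveEquation hφ one_ne_zero (by simp) (by simp) hQ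
  · have h : n - 1 + 1 ≤ Q.totalDegree :=
      le_totalDegree_of_sub_mem_span_curveEquation hφ X_ne_zero (by simp)
        (by simp [pow_succ', mul_assoc]) hQ
    omega

/-- Minimal degrees on quadratic curves `y² = φ(x)`, `1 ≤ deg φ ≤ 2`: the
monomials `x^n` and `y·x^{n-1}` both have minimal degree exactly `n`. -/
theorem curve_degree_quadratic_m2
    (φ : Polynomial ℝ) (h1 : 1 ≤ φ.degree) (h2 : φ.degree ≤ 2)
    (n : ℕ) (hn : 1 ≤ n) :
    (∀ Q : MvPolynomial (Fin 2) ℝ,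
      (MvPolynomial.X 0 : MvPolynomial (Fin 2) ℝ) ^ n - Q ∈
        Ideal.span {(MvPolynomial.X 1 : MvPolynomial (Fin 2) ℝ) ^ 2 -
          Polynomial.aeval (MvPolynomial.X 0 : MvPolynomial (Fin 2) ℝ) φ} →
      n ≤ Q.totalDegree) ∧
    (∀ Q : MvPolynomial (Fin 2) ℝ,
      (MvPolynomial.X 1 : MvPolynomial (Fin 2) ℝ) *
        (MvPolynomial.X 0 : MvPolynomial (Fin 2) ℝ) ^ (n - 1) - Q ∈
        Ideal.span {(MvPolynomial.X 1 : MvPolynomial (Fin 2) ℝ) ^ 2 -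
          Polynomial.aeval (MvPolynomial.X 0 : MvPolynomial (Fin 2) ℝ) φ} →
      n ≤ Q.totalDegree) :=
  curve_degree_quadratic_m2_general φ h2 n
end

section
/- Curve-degree of y·x^{3n−1} on the cubic curve y² = φ(x), deg φ = 3 (degree claim underlying Proposition 4.1, cubic case): Suppose Polynomial.degree φ = 3 and let n ≥ 1. Then: (a) there exists Q ∈ R with totalDegree Q ≤ 2n + 1 and y * x^(3n − 1) − Q ∈ I_2; and (b) for every Q ∈ R with y * x^(3n − 1) − Q ∈ I_2, one has 2n + 1 ≤ totalDegree Q. Hence the minimal degree of y·x^{3n−1} on the curve y² = φ(x) equals 2n + 1. -/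
/-! Upper bound: dividing `r` by `φ`, `y r(x) = y s(x) + y φ(x) g(x) ≡ y s(x) + y ^ 2 (y g(x))` with
`deg s < 3` and `deg g = deg r - 3`, so every drop of the `x`-degree by `3` costs `2` in total
degree; for `r = x ^ (3n - 1)` this gives `2n + 1`.

Lower bound: reading polynomials as polynomials in `y` over `R[x]` and reducing modulo the monic
`y ^ 2 - φ`, the coefficient of `y` is additive and constant on classes modulo the ideal. It sends
`y x ^ k` to `x ^ k`, whereas a monomial `x ^ a y ^ (2j + 1)` is sent to `x ^ a φ ^ j`, of degree
`a + 3j ≤ 3 (a + 2j) / 2`: on the curve `x` has weight `2` and `y` weight `3`. -/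

open Polynomial

noncomputable section

namespace CurveDegree

section Ring

variable {R : Type*} [CommRing R]

def curveIdeal (φ : R[X]) : Ideal (MvPolynomial (Fin 2) R) :=
  Ideal.span {MvPolynomial.X 1 ^ 2 - aeval (MvPolynomial.X 0) φ}

lemma totalDegree_X_mul_aeval_X_le [Nontrivial R] {σ : Type*} (i j : σ) (p : R[X]) :
    (MvPolynomial.X i * aeval (MvPolynomial.X j : MvPolynomial σ R) p).totalDegree ≤
      1 + p.natDegree := by
  rw [aeval_eq_sum_range]
  refine (MvPolynomial.totalDegree_mul _ _).trans (add_le_add (MvPolynomial.totalDegree_X i).le ?_)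
  refine (MvPolynomial.totalDegree_finsetSum _ _).trans (Finset.sup_le fun k hk => ?_)
  refine (MvPolynomial.totalDegree_smul_le _ _).trans ?_
  rw [MvPolynomial.totalDegree_X_pow]
  exact Finset.mem_range_succ_iff.mp hk

def polyInY : MvPolynomial (Fin 2) R →ₐ[R] R[X][X] :=
  MvPolynomial.aeval ![C X, X]

@[simp] lemma polyInY_X_zero : polyInY (MvPolynomial.X 0 : MvPolynomial (Fin 2) R) = C X := by
  simp [polyInY]

@[simp] lemma polyInY_X_one : polyInY (MvPolynomial.X 1 : MvPolynomial (Fin 2) R) = X := by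
  simp [polyInY]

lemma polyInY_aeval_X_zero (φ : R[X]) : polyInY (aeval (MvPolynomial.X 0) φ) = C φ := by
  rw [← aeval_algHom_apply, polyInY_X_zero]
  exact (aeval_algHom_apply CAlgHom X φ).trans (congrArg C (aeval_X_left_apply φ))

lemma polyInY_monomial (s : Fin 2 →₀ ℕ) (c : R) :
    polyInY (MvPolynomial.monomial s c) = C (C c * X ^ s 0) * X ^ s 1 := by
  simp [polyInY, MvPolynomial.aeval_monomial, Finsupp.prod_pow, Fin.prod_univ_two]
  ring

def curvePoly (φ : R[X]) : R[X][X] := X ^ 2 - C φ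

lemma curvePoly_monic (φ : R[X]) : (curvePoly φ).Monic :=
  monic_X_pow_sub_C φ two_ne_zero

lemma polyInY_curveIdeal_generator (φ : R[X]) :
    polyInY (MvPolynomial.X 1 ^ 2 - aeval (MvPolynomial.X 0) φ) = curvePoly φ := by
  rw [map_sub, map_pow, polyInY_X_one, polyInY_aeval_X_zero, curvePoly]

lemma C_mul_X_pow_modByMonic_curvePoly [Nontrivial R] (φ u : R[X]) (b : ℕ) :
    C u * X ^ b %ₘ curvePoly φ = C (u * φ ^ (b / 2)) * X ^ (b % 2) := by
  have hdvd : curvePoly φ ∣ C u * X ^ b - C (u * φ ^ (b / 2)) * X ^ (b % 2) := by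
    have hb : C u * X ^ b - C (u * φ ^ (b / 2)) * X ^ (b % 2) =
        C u * X ^ (b % 2) * ((X ^ 2) ^ (b / 2) - C φ ^ (b / 2)) := by
      have hb := Nat.div_add_mod b 2
      generalize b / 2 = j at hb ⊢
      generalize b % 2 = r at hb ⊢
      subst hb
      rw [map_mul, map_pow]
      ring
    rw [hb]
    exact (sub_dvd_pow_sub_pow _ _ _).mul_left _
  rw [modByMonic_eq_of_dvd_sub (curvePoly_monic φ) hdvd, modByMonic_eq_self_iff (curvePoly_monic φ),
    curvePoly, degree_X_pow_sub_C two_pos]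
  exact (degree_C_mul_X_pow_le _ _).trans_lt (by exact_mod_cast Nat.mod_lt b two_pos)

def yCoeff (φ : R[X]) : MvPolynomial (Fin 2) R →+ R[X] :=
  (lcoeff R[X] 1).toAddMonoidHom.comp <|
    (modByMonicHom (curvePoly φ)).toAddMonoidHom.comp polyInY.toAddMonoidHom

lemma yCoeff_apply (φ : R[X]) (Q : MvPolynomial (Fin 2) R) :
    yCoeff φ Q = (polyInY Q %ₘ curvePoly φ).coeff 1 :=
  rfl

lemma yCoeff_eq_of_sub_mem {φ : R[X]} {Q₁ Q₂ : MvPolynomial (Fin 2) R}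
    (h : Q₁ - Q₂ ∈ curveIdeal φ) : yCoeff φ Q₁ = yCoeff φ Q₂ := by
  have hdvd := map_dvd polyInY (Ideal.mem_span_singleton.mp h)
  rw [polyInY_curveIdeal_generator, map_sub] at hdvd
  rw [yCoeff_apply, yCoeff_apply, modByMonic_eq_of_dvd_sub (curvePoly_monic φ) hdvd]

lemma yCoeff_monomial [Nontrivial R] (φ : R[X]) (s : Fin 2 →₀ ℕ) (c : R) :
    yCoeff φ (MvPolynomial.monomial s c) =
      if s 1 % 2 = 1 then C c * X ^ s 0 * φ ^ (s 1 / 2) else 0 := by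
  rw [yCoeff_apply, polyInY_monomial, C_mul_X_pow_modByMonic_curvePoly, coeff_C_mul_X_pow]
  grind

lemma yCoeff_X_one_mul_X_zero_pow [Nontrivial R] (φ : R[X]) (k : ℕ) :
    yCoeff φ (MvPolynomial.X 1 * MvPolynomial.X 0 ^ k) = X ^ k := by
  rw [yCoeff_apply, map_mul, map_pow, polyInY_X_one, polyInY_X_zero, mul_comm, ← map_pow,
    ← pow_one (X : R[X][X]), C_mul_X_pow_modByMonic_curvePoly]
  simp [-map_pow]

lemma natDegree_yCoeff_monomial_le [Nontrivial R] {φ : R[X]} (hφ : φ.natDegree ≤ 3)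
    (s : Fin 2 →₀ ℕ) (c : R) :
    (yCoeff φ (MvPolynomial.monomial s c)).natDegree ≤ 3 * (s 0 + s 1 - 1) / 2 := by
  rw [yCoeff_monomial]
  split_ifs
  · have hdeg := natDegree_mul_le.trans (add_le_add (natDegree_C_mul_X_pow_le c (s 0))
      (natDegree_pow_le.trans (Nat.mul_le_mul_left (s 1 / 2) hφ)))
    omega
  · simp

lemma natDegree_yCoeff_le [Nontrivial R] {φ : R[X]} (hφ : φ.natDegree ≤ 3)
    (Q : MvPolynomial (Fin 2) R) :
    (yCoeff φ Q).natDegree ≤ 3 * (Q.totalDegree - 1) / 2 := by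
  conv_lhs => rw [Q.as_sum, map_sum]
  refine natDegree_sum_le_of_forall_le _ _ fun s hs => (natDegree_yCoeff_monomial_le hφ _ _).trans ?_
  have hs := MvPolynomial.le_totalDegree hs
  rw [Finsupp.sum_fintype _ _ fun _ => rfl, Fin.sum_univ_two] at hs
  omega

lemma le_totalDegree_of_X_one_mul_X_zero_pow_sub_mem [Nontrivial R] {φ : R[X]}
    (hφ : φ.natDegree ≤ 3) {k : ℕ} {Q : MvPolynomial (Fin 2) R}
    (h : MvPolynomial.X 1 * MvPolynomial.X 0 ^ k - Q ∈ curveIdeal φ) :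
    k ≤ 3 * (Q.totalDegree - 1) / 2 := by
  have hdeg := natDegree_yCoeff_le hφ Q
  rwa [← yCoeff_eq_of_sub_mem h, yCoeff_X_one_mul_X_zero_pow, natDegree_X_pow] at hdeg

end Ring

section Field

variable {K : Type*} [Field K]

lemma exists_eq_mul_add_natDegree_lt {φ : K[X]} (hφ : 0 < φ.natDegree) {r : K[X]} {m : ℕ}
    (hr : r.natDegree < φ.natDegree * (m + 2)) :
    ∃ g s, r = φ * g + s ∧ g.natDegree < φ.natDegree * (m + 1) ∧ s.natDegree < φ.natDegree := by
  refine ⟨r / φ, r % φ, (EuclideanDomain.div_add_mod r φ).symm, ?_, natDegree_mod_lt r hφ.ne'⟩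
  rcases eq_or_ne (r / φ) 0 with hg | hg
  · rw [hg, natDegree_zero]
    positivity
  · have hmul : φ * (r / φ) = r - r % φ := eq_sub_of_add_eq (EuclideanDomain.div_add_mod r φ)
    have hdeg := natDegree_sub_le r (r % φ)
    rw [← hmul, natDegree_mul (ne_zero_of_natDegree_gt hφ) hg] at hdeg
    have := natDegree_mod_lt r hφ.ne'
    have : φ.natDegree * (m + 2) = φ.natDegree * (m + 1) + φ.natDegree := by ring
    omega

lemma exists_totalDegree_le_of_natDegree_lt {φ : K[X]} (hφ : 0 < φ.natDegree) (m : ℕ)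
    (r : K[X]) (hr : r.natDegree < φ.natDegree * (m + 1)) :
    ∃ Q : MvPolynomial (Fin 2) K, Q.totalDegree ≤ 2 * m + φ.natDegree ∧
      MvPolynomial.X 1 * aeval (MvPolynomial.X 0) r - Q ∈ curveIdeal φ := by
  induction m generalizing r with
  | zero => exact ⟨_, (totalDegree_X_mul_aeval_X_le 1 0 r).trans (by omega), by simp⟩
  | succ m ih =>
    obtain ⟨g, s, rfl, hg, hs⟩ := exists_eq_mul_add_natDegree_lt hφ hr
    obtain ⟨Q, hQ, hQmem⟩ := ih g hg
    set y : MvPolynomial (Fin 2) K := MvPolynomial.X 1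
    refine ⟨y * aeval (MvPolynomial.X 0) s + y ^ 2 * Q, ?_, ?_⟩
    · have hyQ := (MvPolynomial.totalDegree_mul (y ^ 2) Q).trans
        (add_le_add ((MvPolynomial.totalDegree_pow y 2).trans
          (by rw [MvPolynomial.totalDegree_X])) hQ)
      have hys : (y * aeval (MvPolynomial.X 0) s).totalDegree ≤ 1 + s.natDegree :=
        totalDegree_X_mul_aeval_X_le 1 0 s
      exact (MvPolynomial.totalDegree_add _ _).trans (max_le (by omega) (by omega))
    · have hy : Ideal.Quotient.mk (curveIdeal φ) y ^ 2 =
          Ideal.Quotient.mk (curveIdeal φ) (aeval (MvPolynomial.X 0) φ) :=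
        (map_pow _ _ _).symm.trans (Ideal.Quotient.eq.mpr (Ideal.subset_span rfl))
      rw [← Ideal.Quotient.eq] at hQmem ⊢
      simp only [map_add, map_mul, map_pow] at hQmem ⊢
      linear_combination (-(Ideal.Quotient.mk (curveIdeal φ) y *
        Ideal.Quotient.mk (curveIdeal φ) (aeval (MvPolynomial.X 0) g))) * hy +
        Ideal.Quotient.mk (curveIdeal φ) y ^ 2 * hQmem

end Field

end CurveDegree

open CurveDegree in
/-- The minimal degree of `y·x^{3n-1}` on the cubic curve `y² = φ(x)`,
`deg φ = 3`, equals `2n + 1`. -/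
theorem curve_degree_y_x_pow_cubic
    (φ : Polynomial ℝ) (hφ : φ.degree = 3) (n : ℕ) (hn : 1 ≤ n) :
    (∃ Q : MvPolynomial (Fin 2) ℝ, Q.totalDegree ≤ 2 * n + 1 ∧
      (MvPolynomial.X 1 : MvPolynomial (Fin 2) ℝ) *
        (MvPolynomial.X 0 : MvPolynomial (Fin 2) ℝ) ^ (3 * n - 1) - Q ∈
        Ideal.span {(MvPolynomial.X 1 : MvPolynomial (Fin 2) ℝ) ^ 2 -
          Polynomial.aeval (MvPolynomial.X 0 : MvPolynomial (Fin 2) ℝ) φ}) ∧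
    (∀ Q : MvPolynomial (Fin 2) ℝ,
      (MvPolynomial.X 1 : MvPolynomial (Fin 2) ℝ) *
        (MvPolynomial.X 0 : MvPolynomial (Fin 2) ℝ) ^ (3 * n - 1) - Q ∈
        Ideal.span {(MvPolynomial.X 1 : MvPolynomial (Fin 2) ℝ) ^ 2 -
          Polynomial.aeval (MvPolynomial.X 0 : MvPolynomial (Fin 2) ℝ) φ} →
      2 * n + 1 ≤ Q.totalDegree) := by
  have hφ3 : φ.natDegree = 3 := natDegree_eq_of_degree_eq_some hφ
  refine ⟨?_, fun Q hQ => ?_⟩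
  · obtain ⟨Q, hQdeg, hQmem⟩ := exists_totalDegree_le_of_natDegree_lt (φ := φ) (by omega) (n - 1)
      (X ^ (3 * n - 1)) (by rw [natDegree_X_pow, hφ3]; omega)
    exact ⟨Q, by omega, by simpa [curveIdeal] using hQmem⟩
  · have := le_totalDegree_of_X_one_mul_X_zero_pow_sub_mem hφ3.le hQ
    omega
end
end

section
/- Curve-degree of x^{4n−1} on an even quartic curve y² = φ(x) (degree claim in the proof of Proposition 4.1, case (eq. for Y^{(2,4)})): Suppose φ is even (φ.comp(−X) = φ, i.e. all odd-degree coefficients of φ vanish) and Polynomial.degree φ = 4, and let n ≥ 1. Then: (a) there exists Q ∈ R with totalDegree Q ≤ 2n + 1 and x^(4n − 1) − Q ∈ I_2; and (b) for every Q ∈ R with x^(4n − 1) − Q ∈ I_2, one has 2n + 1 ≤ totalDegree Q. Hence the minimal degree of x^{4n−1} on the curve y² = φ(x) equals 2n + 1. -/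
/-!
Write `φ = a x⁴ + r(x)`; evenness kills the `x³` term, so `deg r ≤ 2`. On the curve
`x⁴ = a⁻¹ (y² - r(x))`, hence `x^{4n-1} = x³ (x⁴)^{n-1}` is congruent to a polynomial of degree
`3 + 2 (n - 1) = 2n + 1`.

For the lower bound, view `ℝ[x, y]` as `ℝ[x][y]` and reduce modulo the monic `y² - φ(x)`: taking the
`y⁰`-coefficient of the remainder is a linear functional that kills the ideal and is the identity
on `ℝ[x]`. A monomial `x^i y^j` is sent to `x^i φ^{j/2}` for even `j` and to `0` for odd `j`.
When `i + j ≤ 2n`, the coefficient of `x^{4n-1}` in `x^i φ^{j/2}` vanishes: for even `i` the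
polynomial is even, and for odd `i` its degree `i + 2j` is less than `4n - 1`. So no polynomial of
degree `≤ 2n` has the same image as `x^{4n-1}`.
-/

open Polynomial

namespace Polynomial

variable {R : Type*} [CommRing R]

theorem coeff_comp_neg_X (p : R[X]) (m : ℕ) :
    (p.comp (-X)).coeff m = (-1) ^ m * p.coeff m := by
  induction p using Polynomial.induction_on' with
  | add p q hp hq => simp [add_comp, hp, hq, mul_add]
  | monomial k c =>
    rw [monomial_comp, neg_pow, ← C_1, ← C_neg, ← C_pow, ← mul_assoc, ← C_mul, coeff_C_mul_X_pow,
      coeff_monomial]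
    split_ifs <;> simp_all [mul_comm]

theorem X_pow_modByMonic_X_pow_sub_C [Nontrivial R] {e : ℕ} (he : 0 < e) (a : R) (k : ℕ) :
    X ^ k %ₘ (X ^ e - C a) = C (a ^ (k / e)) * X ^ (k % e) := by
  obtain ⟨c, hc⟩ := sub_dvd_pow_sub_pow (X ^ e) (C a) (k / e)
  refine (div_modByMonic_unique (c * X ^ (k % e)) _ (monic_X_pow_sub_C a he.ne') ⟨?_, ?_⟩).2
  · conv_rhs => rw [← Nat.div_add_mod k e, pow_add, pow_mul]
    rw [C_pow]
    linear_combination (-X ^ (k % e) : R[X]) * hc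
  · rw [degree_X_pow_sub_C he]
    exact (degree_C_mul_X_pow_le _ _).trans_lt (by exact_mod_cast Nat.mod_lt k he)

section Even

variable [NoZeroDivisors R] [CharZero R] {p : R[X]}

theorem coeff_eq_zero_of_comp_neg_X_eq_self (hp : p.comp (-X) = p) {m : ℕ} (hm : Odd m) :
    p.coeff m = 0 := by
  have h := coeff_comp_neg_X p m
  rwa [hp, hm.neg_one_pow, neg_one_mul, eq_comm, CharZero.neg_eq_self_iff] at h

theorem natDegree_eraseLead_le_of_comp_neg_X_eq_self (hp : p.comp (-X) = p) :
    p.eraseLead.natDegree ≤ p.natDegree - 2 := by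
  refine natDegree_le_iff_coeff_eq_zero.2 fun N hN => ?_
  rw [eraseLead_coeff]
  split_ifs with hNp
  · rfl
  rcases lt_or_gt_of_ne hNp with hlt | hgt
  · refine coeff_eq_zero_of_comp_neg_X_eq_self hp (Nat.not_even_iff_odd.1 fun hN_even => ?_)
    have hlead : p.leadingCoeff = 0 := coeff_eq_zero_of_comp_neg_X_eq_self hp <| by
      rw [show p.natDegree = N + 1 by omega]
      exact hN_even.add_one
    rw [leadingCoeff_eq_zero.1 hlead, natDegree_zero] at hlt
    omega
  · exact coeff_eq_zero_of_natDegree_lt hgt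

theorem coeff_X_pow_mul_pow_eq_zero_of_odd (hp : p.comp (-X) = p) {i j N : ℕ} (hN : Odd N)
    (hlt : Odd i → i + j * p.natDegree < N) : (X ^ i * p ^ j).coeff N = 0 := by
  rcases Nat.even_or_odd i with hi | hi
  · refine coeff_eq_zero_of_comp_neg_X_eq_self ?_ hN
    rw [mul_comp, X_pow_comp, pow_comp, hp, hi.neg_pow]
  · refine coeff_eq_zero_of_natDegree_lt ((natDegree_mul_le.trans ?_).trans_lt (hlt hi))
    rw [natDegree_X_pow]
    exact add_le_add_right natDegree_pow_le _

end Even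

end Polynomial

theorem MvPolynomial.totalDegree_aeval_X_le_s14 {R σ : Type*} [CommSemiring R] (i : σ) (p : R[X]) :
    (Polynomial.aeval (X i : MvPolynomial σ R) p).totalDegree ≤ p.natDegree := by
  rw [Polynomial.aeval_eq_sum_range]
  refine (totalDegree_finsetSum _ _).trans (Finset.sup_le fun k hk => ?_)
  rw [X_pow_eq_monomial]
  refine (totalDegree_smul_le _ _).trans ((totalDegree_monomial_le _ _).trans ?_)
  simpa [Finsupp.sum_single_index, Nat.lt_succ_iff] using hk

section UpperBound

variable {K : Type*} [Field K]

theorem X_zero_pow_sub_mem_span {φ : K[X]} (hφ : φ ≠ 0) (e m k : ℕ) :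
    MvPolynomial.X 0 ^ (φ.natDegree * m + k) -
        MvPolynomial.C (φ.leadingCoeff⁻¹ ^ m) * MvPolynomial.X 0 ^ k *
          (MvPolynomial.X 1 ^ e - aeval (MvPolynomial.X 0) φ.eraseLead) ^ m ∈
      Ideal.span {MvPolynomial.X 1 ^ e - aeval (MvPolynomial.X 0 : MvPolynomial (Fin 2) K) φ} := by
  set x : MvPolynomial (Fin 2) K := MvPolynomial.X 0
  set y : MvPolynomial (Fin 2) K := MvPolynomial.X 1
  set a := φ.leadingCoeff
  set r := aeval x φ.eraseLead
  have hsplit : aeval x φ = MvPolynomial.C a * x ^ φ.natDegree + r := by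
    have h := congrArg (aeval x) (eraseLead_add_C_mul_X_pow φ)
    rw [map_add, map_mul, aeval_C, map_pow, aeval_X, MvPolynomial.algebraMap_eq] at h
    rw [← h, add_comm]
  have hinv : MvPolynomial.C (a⁻¹ ^ m) * MvPolynomial.C a ^ m = (1 : MvPolynomial (Fin 2) K) := by
    rw [← map_pow, ← map_mul, ← mul_pow, inv_mul_cancel₀ (leadingCoeff_ne_zero.2 hφ), one_pow,
      map_one]
  obtain ⟨c, hc⟩ := sub_dvd_pow_sub_pow (MvPolynomial.C a * x ^ φ.natDegree) (y ^ e - r) m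
  refine Ideal.mem_span_singleton.2 ⟨-(MvPolynomial.C (a⁻¹ ^ m) * x ^ k * c), ?_⟩
  rw [hsplit]
  linear_combination (MvPolynomial.C (a⁻¹ ^ m) * x ^ k) * hc - x ^ (φ.natDegree * m + k) * hinv

theorem exists_totalDegree_le_and_X_zero_pow_sub_mem_span {φ : K[X]} (hφ : φ ≠ 0) {e : ℕ}
    (he : φ.eraseLead.natDegree ≤ e) (m k : ℕ) :
    ∃ Q : MvPolynomial (Fin 2) K, Q.totalDegree ≤ k + e * m ∧
      MvPolynomial.X 0 ^ (φ.natDegree * m + k) - Q ∈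
        Ideal.span {MvPolynomial.X 1 ^ e - aeval (MvPolynomial.X 0) φ} := by
  refine ⟨_, ?_, X_zero_pow_sub_mem_span hφ e m k⟩
  grw [MvPolynomial.totalDegree_mul, MvPolynomial.totalDegree_mul, MvPolynomial.totalDegree_C,
    MvPolynomial.totalDegree_X_pow, MvPolynomial.totalDegree_pow, MvPolynomial.totalDegree_sub,
    MvPolynomial.totalDegree_X_pow, MvPolynomial.totalDegree_aeval_X_le_s14, he, max_self, zero_add,
    mul_comm]

end UpperBound

section LowerBound

variable {R : Type*} [CommRing R]

noncomputable def toPolynomialY : MvPolynomial (Fin 2) R →ₐ[R] R[X][X] :=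
  MvPolynomial.aeval ![C X, X]

@[simp]
theorem toPolynomialY_X_zero : toPolynomialY (MvPolynomial.X 0 : MvPolynomial (Fin 2) R) = C X := by
  simp [toPolynomialY]

@[simp]
theorem toPolynomialY_X_one : toPolynomialY (MvPolynomial.X 1 : MvPolynomial (Fin 2) R) = X := by
  simp [toPolynomialY]

@[simp]
theorem toPolynomialY_aeval_X_zero (φ : R[X]) :
    toPolynomialY (aeval (MvPolynomial.X 0 : MvPolynomial (Fin 2) R) φ) = C φ := by
  rw [← aeval_algHom_apply, toPolynomialY_X_zero]
  simpa using aeval_algHom_apply (CAlgHom (R := R) (A := R[X])) X φ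

theorem toPolynomialY_monomial (s : Fin 2 →₀ ℕ) (c : R) :
    toPolynomialY (MvPolynomial.monomial s c) = C (C c * X ^ s 0) * X ^ s 1 := by
  simp [toPolynomialY, MvPolynomial.aeval_monomial, Finsupp.prod_pow, Fin.prod_univ_two,
    Polynomial.algebraMap_apply, mul_assoc]

/-- The coefficient of `y⁰` in the remainder of `P` modulo `y^e - φ(x)`, i.e. the first coordinate
of `P` in the `R[x]`-basis `1, y, …, y^(e-1)` of the coordinate ring of the curve `y^e = φ(x)`. -/
noncomputable def curveConstCoeff (e : ℕ) (φ : R[X]) : MvPolynomial (Fin 2) R →ₗ[R] R[X] :=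
  (lcoeff R[X] 0).restrictScalars R ∘ₗ (modByMonicHom (X ^ e - C φ)).restrictScalars R ∘ₗ
    toPolynomialY.toLinearMap

theorem curveConstCoeff_apply (e : ℕ) (φ : R[X]) (P : MvPolynomial (Fin 2) R) :
    curveConstCoeff e φ P = (toPolynomialY P %ₘ (X ^ e - C φ)).coeff 0 :=
  rfl

theorem curveConstCoeff_eq_zero_of_mem_span {e : ℕ} (he : 0 < e) {φ : R[X]}
    {P : MvPolynomial (Fin 2) R}
    (hP : P ∈ Ideal.span {MvPolynomial.X 1 ^ e - aeval (MvPolynomial.X 0) φ}) :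
    curveConstCoeff e φ P = 0 := by
  obtain ⟨H, rfl⟩ := Ideal.mem_span_singleton'.mp hP
  rw [curveConstCoeff_apply, map_mul, map_sub, map_pow, toPolynomialY_X_one,
    toPolynomialY_aeval_X_zero, (modByMonic_eq_zero_iff_dvd (monic_X_pow_sub_C φ he.ne')).2
      (dvd_mul_left _ _), coeff_zero]

variable [Nontrivial R]

theorem curveConstCoeff_monomial {e : ℕ} (he : 0 < e) (φ : R[X]) (s : Fin 2 →₀ ℕ) (c : R) :
    curveConstCoeff e φ (MvPolynomial.monomial s c) =
      if e ∣ s 1 then C c * X ^ s 0 * φ ^ (s 1 / e) else 0 := by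
  rw [curveConstCoeff_apply, toPolynomialY_monomial, ← smul_eq_C_mul, smul_modByMonic,
    X_pow_modByMonic_X_pow_sub_C he, coeff_smul, coeff_C_mul_X_pow]
  simp only [@eq_comm _ 0, ← Nat.dvd_iff_mod_eq_zero, smul_eq_mul, mul_ite, mul_zero]

theorem curveConstCoeff_X_zero_pow {e : ℕ} (he : 0 < e) (φ : R[X]) (k : ℕ) :
    curveConstCoeff e φ (MvPolynomial.X 0 ^ k) = X ^ k := by
  simp [MvPolynomial.X_pow_eq_monomial, curveConstCoeff_monomial he]

theorem coeff_curveConstCoeff_eq_zero_of_totalDegree_le [NoZeroDivisors R] [CharZero R]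
    {φ : R[X]} (hev : φ.comp (-X) = φ) (hdeg : φ.natDegree ≤ 4) {n : ℕ} (hn : 1 ≤ n)
    {Q : MvPolynomial (Fin 2) R} (hQ : Q.totalDegree ≤ 2 * n) :
    (curveConstCoeff 2 φ Q).coeff (4 * n - 1) = 0 := by
  rw [Q.as_sum, map_sum, finsetSum_coeff]
  refine Finset.sum_eq_zero fun s hs => ?_
  have hs_deg : s 0 + s 1 ≤ 2 * n := by
    have := MvPolynomial.le_totalDegree hs
    rw [Finsupp.sum_fintype _ _ fun _ => rfl, Fin.sum_univ_two] at this
    omega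
  rw [curveConstCoeff_monomial two_pos]
  split_ifs with h2
  · rw [mul_assoc, coeff_C_mul,
      coeff_X_pow_mul_pow_eq_zero_of_odd hev ⟨2 * n - 1, by omega⟩ ?_, mul_zero]
    rintro ⟨t, ht⟩
    have : s 1 / 2 * φ.natDegree ≤ s 1 / 2 * 4 := Nat.mul_le_mul_left _ hdeg
    omega
  · rw [coeff_zero]

end LowerBound

/-- The minimal degree of `x^{4n-1}` on an even quartic curve `y² = φ(x)`,
`deg φ = 4`, `φ` even, equals `2n + 1`. -/
theorem curve_degree_x_pow_even_quartic
    (φ : Polynomial ℝ) (hev : φ.comp (-Polynomial.X) = φ) (hφ : φ.degree = 4)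
    (n : ℕ) (hn : 1 ≤ n) :
    (∃ Q : MvPolynomial (Fin 2) ℝ, Q.totalDegree ≤ 2 * n + 1 ∧
      (MvPolynomial.X 0 : MvPolynomial (Fin 2) ℝ) ^ (4 * n - 1) - Q ∈
        Ideal.span {(MvPolynomial.X 1 : MvPolynomial (Fin 2) ℝ) ^ 2 -
          Polynomial.aeval (MvPolynomial.X 0 : MvPolynomial (Fin 2) ℝ) φ}) ∧
    (∀ Q : MvPolynomial (Fin 2) ℝ,
      (MvPolynomial.X 0 : MvPolynomial (Fin 2) ℝ) ^ (4 * n - 1) - Q ∈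
        Ideal.span {(MvPolynomial.X 1 : MvPolynomial (Fin 2) ℝ) ^ 2 -
          Polynomial.aeval (MvPolynomial.X 0 : MvPolynomial (Fin 2) ℝ) φ} →
      2 * n + 1 ≤ Q.totalDegree) := by
  have hφ0 : φ ≠ 0 := by
    rintro rfl
    simp at hφ
  have hnat : φ.natDegree = 4 := natDegree_eq_of_degree_eq_some hφ
  constructor
  · obtain ⟨Q, hQ, hmem⟩ := exists_totalDegree_le_and_X_zero_pow_sub_mem_span hφ0
      ((natDegree_eraseLead_le_of_comp_neg_X_eq_self hev).trans (by rw [hnat])) (n - 1) 3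
    rw [hnat, show 4 * (n - 1) + 3 = 4 * n - 1 by omega] at hmem
    exact ⟨Q, by omega, hmem⟩
  · intro Q hQ
    by_contra! hlt
    have hcong := curveConstCoeff_eq_zero_of_mem_span two_pos hQ
    rw [map_sub, curveConstCoeff_X_zero_pow two_pos, sub_eq_zero] at hcong
    have hcoeff := coeff_curveConstCoeff_eq_zero_of_totalDegree_le hev hnat.le hn (Q := Q) (by omega)
    rw [← hcong, coeff_X_pow_self] at hcoeff
    exact one_ne_zero hcoeff
end

section
/- Curve-degree of y·x^{4n−2} on an even quartic curve y² = φ(x) (degree claim in the proof of Proposition 4.1, case (eq. for Y^{(2,4)})): Suppose φ is even (φ.comp(−X) = φ, i.e. all odd-degree coefficients of φ vanish) and Polynomial.degree φ = 4, and let n ≥ 1. Then: (a) there exists Q ∈ R with totalDegree Q ≤ 2n + 1 and y * x^(4n − 2) − Q ∈ I_2; and (b) for every Q ∈ R with y * x^(4n − 2) − Q ∈ I_2, one has 2n + 1 ≤ totalDegree Q. Hence the minimal degree of y·x^{4n−2} on the curve y² = φ(x) equals 2n + 1. -/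
/-!
Give `x` weight 1 and `y` weight 2. The top weighted part of `y² - φ(x)` is `y² - c x⁴`, where
`c` is the leading coefficient of `φ`. Modulo the curve equation, `x⁴ = (y² - (lower terms)) / c`
trades weight for total degree, so `xʲ` is congruent to a polynomial of total degree at most
`⌈j/2⌉ + 1`, and `y x^(4n-2)` to one of total degree at most `2n + 1`.

Conversely, if `y x^(4n-2) ≡ Q` with `deg Q ≤ 2n`, the weight-`4n` part of `Q` is some `q y^(2n)`.
Comparing top weighted parts in `y x^(4n-2) - Q = P (y² - φ(x))` makes `y x^(4n-2) - q y^(2n)` a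
multiple of `y² - c x⁴`. Evaluating at `(1, s)` and `(1, -s)` with `s² = c` gives `s = -s`,
impossible since `c ≠ 0`.
-/

open MvPolynomial

theorem Polynomial.coeff_mem_span_leadingCoeff_of_dvd {R : Type*} [CommRing R] [IsDomain R]
    {f g : Polynomial R} {N : ℕ} (hgf : g ∣ f) (hf : f.natDegree ≤ N) (hg : g.natDegree ≤ N) :
    f.coeff N ∈ Ideal.span {g.leadingCoeff} := by
  obtain ⟨p, rfl⟩ := hgf
  rcases eq_or_ne p 0 with rfl | hp
  · simp
  rcases eq_or_ne g 0 with rfl | hg0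
  · simp
  rw [natDegree_mul hg0 hp] at hf
  rw [← Nat.add_sub_cancel' hg, coeff_mul_add_eq_of_natDegree_le le_rfl (by omega)]
  exact Ideal.mul_mem_right _ _ (Ideal.mem_span_singleton_self _)

namespace MvPolynomial

variable {σ R : Type*} [CommRing R]

section QuotTotalDegreeLE

variable (I : Ideal (MvPolynomial σ R))

noncomputable def quotTotalDegreeLE (d : ℕ) : Submodule R (MvPolynomial σ R ⧸ I) :=
  (restrictTotalDegree σ R d).map (Ideal.Quotient.mkₐ R I).toLinearMap

variable {I}

theorem mk_mem_quotTotalDegreeLE_iff {d : ℕ} {F : MvPolynomial σ R} :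
    Ideal.Quotient.mk I F ∈ quotTotalDegreeLE I d ↔
      ∃ Q : MvPolynomial σ R, Q.totalDegree ≤ d ∧ F - Q ∈ I := by
  constructor
  · rintro ⟨Q, hQ, hQF⟩
    exact ⟨Q, (mem_restrictTotalDegree σ _ Q).mp hQ, Ideal.Quotient.eq.mp hQF.symm⟩
  · rintro ⟨Q, hQ, hFQ⟩
    exact ⟨Q, (mem_restrictTotalDegree σ _ Q).mpr hQ, (Ideal.Quotient.eq.mpr hFQ).symm⟩

theorem mk_mem_quotTotalDegreeLE {d : ℕ} {F : MvPolynomial σ R} (hF : F.totalDegree ≤ d) :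
    Ideal.Quotient.mk I F ∈ quotTotalDegreeLE I d :=
  mk_mem_quotTotalDegreeLE_iff.mpr ⟨F, hF, by simp⟩

theorem quotTotalDegreeLE_mono : Monotone (quotTotalDegreeLE I) := fun _ _ hde =>
  Submodule.map_mono fun F hF =>
    (mem_restrictTotalDegree σ _ F).mpr (((mem_restrictTotalDegree σ _ F).mp hF).trans hde)

theorem mul_mem_quotTotalDegreeLE {d e : ℕ} {a b : MvPolynomial σ R ⧸ I}
    (ha : a ∈ quotTotalDegreeLE I d) (hb : b ∈ quotTotalDegreeLE I e) :
    a * b ∈ quotTotalDegreeLE I (d + e) := by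
  obtain ⟨P, hP, rfl⟩ := ha
  obtain ⟨Q, hQ, rfl⟩ := hb
  rw [SetLike.mem_coe, mem_restrictTotalDegree] at hP hQ
  rw [AlgHom.toLinearMap_apply, AlgHom.toLinearMap_apply, ← map_mul]
  exact mk_mem_quotTotalDegreeLE ((totalDegree_mul P Q).trans (add_le_add hP hQ))

end QuotTotalDegreeLE

section WeightedScale

noncomputable def weightedScale (w : σ → ℕ) :
    MvPolynomial σ R →ₐ[R] Polynomial (MvPolynomial σ R) :=
  aeval fun i => Polynomial.C (X i) * Polynomial.X ^ w i

theorem weightedScale_monomial (w : σ → ℕ) (d : σ →₀ ℕ) (r : R) :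
    weightedScale w (monomial d r) =
      Polynomial.C (monomial d r) * Polynomial.X ^ Finsupp.weight w d := by
  rw [weightedScale, aeval_monomial]
  simp only [mul_pow, Finsupp.prod_mul, ← map_pow, ← map_finsuppProd, ← pow_mul]
  rw [monomial_eq, map_mul, Polynomial.algebraMap_apply, algebraMap_eq, mul_assoc]
  congr 2
  simp only [Finsupp.prod, Finset.prod_pow_eq_pow_sum, Finsupp.weight_apply, Finsupp.sum,
    smul_eq_mul, mul_comm]

theorem coeff_weightedScale (w : σ → ℕ) (F : MvPolynomial σ R) (k : ℕ) :
    (weightedScale w F).coeff k = weightedHomogeneousComponent w k F := by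
  induction F using MvPolynomial.induction_on' with
  | monomial d r =>
    have hd := isWeightedHomogeneous_monomial w d r rfl
    rw [weightedScale_monomial, Polynomial.coeff_C_mul_X_pow]
    split_ifs with h
    · rw [h, hd.weightedHomogeneousComponent_same]
    · exact (hd.weightedHomogeneousComponent_ne _ h).symm
  | add p q hp hq => rw [map_add, Polynomial.coeff_add, hp, hq, map_add]

theorem IsWeightedHomogeneous.weightedScale_eq {w : σ → ℕ} {F : MvPolynomial σ R} {m : ℕ}
    (hF : IsWeightedHomogeneous w F m) :
    weightedScale w F = Polynomial.C F * Polynomial.X ^ m := by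
  ext1 k
  rw [coeff_weightedScale, Polynomial.coeff_C_mul_X_pow]
  split_ifs with h
  · rw [h, hF.weightedHomogeneousComponent_same]
  · exact hF.weightedHomogeneousComponent_ne _ h

theorem natDegree_weightedScale_le {w : σ → ℕ} {F : MvPolynomial σ R} {N : ℕ}
    (hF : ∀ d ∈ F.support, Finsupp.weight w d ≤ N) :
    (weightedScale w F).natDegree ≤ N := by
  refine Polynomial.natDegree_le_iff_coeff_eq_zero.mpr fun k hk => ?_
  rw [coeff_weightedScale]
  exact weightedHomogeneousComponent_eq_zero' _ _ fun d hd => by have := hF d hd; omega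

end WeightedScale

section WeightOneTwo

theorem weight_one_two_apply (d : Fin 2 →₀ ℕ) :
    Finsupp.weight ![1, 2] d = d 0 + 2 * d 1 := by
  simp [Finsupp.weight_apply, Finsupp.sum_fintype, Fin.sum_univ_two, mul_comm]

theorem weight_one_two_le_two_mul_totalDegree {F : MvPolynomial (Fin 2) R} {d : Fin 2 →₀ ℕ}
    (hd : d ∈ F.support) : Finsupp.weight ![1, 2] d ≤ 2 * F.totalDegree := by
  have := le_totalDegree hd
  rw [Finsupp.sum_fintype _ _ fun _ => rfl, Fin.sum_univ_two] at this
  rw [weight_one_two_apply]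
  omega

theorem weightedHomogeneousComponent_one_two_of_totalDegree_le {Q : MvPolynomial (Fin 2) R}
    {k : ℕ} (hQ : Q.totalDegree ≤ k) :
    weightedHomogeneousComponent ![1, 2] (2 * k) Q =
      C (Q.coeff (Finsupp.single 1 k)) * X 1 ^ k := by
  classical
  ext d
  rw [coeff_weightedHomogeneousComponent, coeff_C_mul, X_pow_eq_monomial, coeff_monomial]
  by_cases hd : Finsupp.single 1 k = d
  · subst hd
    simp [weight_one_two_apply]
  · rw [if_neg hd, mul_zero, ite_eq_right_iff]
    intro hw
    by_contra hQd
    have hle := le_totalDegree (mem_support_iff.mpr hQd)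
    rw [Finsupp.sum_fintype _ _ fun _ => rfl, Fin.sum_univ_two] at hle
    rw [weight_one_two_apply] at hw
    have h0 : d 0 = 0 := by omega
    have h1 : d 1 = k := by omega
    exact hd (Finsupp.ext fun i => by fin_cases i <;> simp [h0, h1])

end WeightOneTwo

section Curve

variable {K : Type*} [Field K]

theorem X_one_sq_sub_C_mul_X_zero_pow_ne_zero (c : K) :
    (X 1 ^ 2 - C c * X 0 ^ 4 : MvPolynomial (Fin 2) K) ≠ 0 := fun h => by
  simpa using congrArg (eval ![0, 1]) h

theorem coeff_weightedScale_X_one_sq_sub_aeval (φ : Polynomial K) (k : ℕ) :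
    (weightedScale ![1, 2] (X 1 ^ 2 - Polynomial.aeval (X 0) φ : MvPolynomial (Fin 2) K)).coeff k =
      (if k = 4 then X 1 ^ 2 else 0) - C (φ.coeff k) * X 0 ^ k := by
  rw [map_sub, ← Polynomial.aeval_algHom_apply, Polynomial.coeff_sub, map_pow]
  simp only [weightedScale, aeval_X, Matrix.cons_val_zero, Matrix.cons_val_one, pow_one]
  rw [← Polynomial.aeval_map_algebraMap (MvPolynomial (Fin 2) K), ← Polynomial.comp_eq_aeval,
    Polynomial.comp_C_mul_X_coeff, Polynomial.coeff_map, mul_pow, ← Polynomial.C_pow, ← pow_mul,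
    Polynomial.coeff_C_mul_X_pow, algebraMap_eq]

theorem natDegree_weightedScale_X_one_sq_sub_aeval {φ : Polynomial K} (hφ : φ.natDegree = 4) :
    (weightedScale ![1, 2]
      (X 1 ^ 2 - Polynomial.aeval (X 0) φ : MvPolynomial (Fin 2) K)).natDegree = 4 := by
  refine Polynomial.natDegree_eq_of_le_of_coeff_ne_zero ?_ ?_
  · refine Polynomial.natDegree_le_iff_coeff_eq_zero.mpr fun k hk => ?_
    rw [coeff_weightedScale_X_one_sq_sub_aeval, if_neg hk.ne',
      Polynomial.coeff_eq_zero_of_natDegree_lt (by omega : φ.natDegree < k)]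
    simp
  · rw [coeff_weightedScale_X_one_sq_sub_aeval, if_pos rfl]
    exact X_one_sq_sub_C_mul_X_zero_pow_ne_zero _

theorem leadingCoeff_weightedScale_X_one_sq_sub_aeval {φ : Polynomial K} (hφ : φ.natDegree = 4) :
    (weightedScale ![1, 2]
      (X 1 ^ 2 - Polynomial.aeval (X 0) φ : MvPolynomial (Fin 2) K)).leadingCoeff =
      X 1 ^ 2 - C (φ.coeff 4) * X 0 ^ 4 := by
  rw [Polynomial.leadingCoeff, natDegree_weightedScale_X_one_sq_sub_aeval hφ,
    coeff_weightedScale_X_one_sq_sub_aeval, if_pos rfl]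

theorem mk_X_one_sq_eq_aeval {I : Ideal (MvPolynomial (Fin 2) K)} {φ : Polynomial K}
    (hI : X 1 ^ 2 - Polynomial.aeval (X 0) φ ∈ I) :
    Ideal.Quotient.mk I (X 1) ^ 2 = Polynomial.aeval (Ideal.Quotient.mk I (X 0)) φ := by
  rw [← map_pow, ← Ideal.Quotient.mkₐ_eq_mk K, Polynomial.aeval_algHom_apply,
    Ideal.Quotient.mkₐ_eq_mk, Ideal.Quotient.eq]
  exact hI

theorem mk_X_zero_pow_mem_quotTotalDegreeLE {I : Ideal (MvPolynomial (Fin 2) K)}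
    {φ : Polynomial K} (hφ : φ.degree = 4) (hI : X 1 ^ 2 - Polynomial.aeval (X 0) φ ∈ I)
    (j : ℕ) : Ideal.Quotient.mk I (X 0) ^ j ∈ quotTotalDegreeLE I ((j + 1) / 2 + 1) := by
  set ξ := Ideal.Quotient.mk I (X 0) with hξ
  induction j using Nat.strong_induction_on with
  | _ j ih =>
  rcases lt_or_ge j 4 with hj | hj
  · rw [← map_pow]
    exact mk_mem_quotTotalDegreeLE ((totalDegree_X_pow 0 j).trans_le (by omega))
  obtain ⟨k, rfl⟩ : ∃ k, j = k + 4 := ⟨j - 4, by omega⟩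
  have hrel : φ.coeff 4 • ξ ^ (k + 4) = Ideal.Quotient.mk I (X 1) ^ 2 * ξ ^ k -
      ∑ i ∈ Finset.range 4, φ.coeff i • ξ ^ (k + i) := by
    rw [mk_X_one_sq_eq_aeval hI, ← hξ, Polynomial.aeval_eq_sum_range,
      Polynomial.natDegree_eq_of_degree_eq_some hφ, Finset.sum_range_succ, add_mul, Finset.sum_mul]
    simp only [smul_mul_assoc, ← pow_add, add_comm _ k]
    abel
  rw [← inv_smul_smul₀ (Polynomial.coeff_ne_zero_of_eq_degree hφ) (ξ ^ (k + 4)), hrel]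
  refine Submodule.smul_mem _ _ (Submodule.sub_mem _ ?_ (Submodule.sum_mem _ fun i hi => ?_))
  · rw [← map_pow]
    exact quotTotalDegreeLE_mono (by omega) (mul_mem_quotTotalDegreeLE
      (mk_mem_quotTotalDegreeLE (totalDegree_X_pow 1 2).le) (ih k (by omega)))
  · rw [Finset.mem_range] at hi
    exact Submodule.smul_mem _ _ (quotTotalDegreeLE_mono (by omega) (ih (k + i) (by omega)))

theorem exists_totalDegree_le_of_X_one_mul_X_zero_pow {I : Ideal (MvPolynomial (Fin 2) K)}
    {φ : Polynomial K} (hφ : φ.degree = 4) (hI : X 1 ^ 2 - Polynomial.aeval (X 0) φ ∈ I)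
    {n : ℕ} (hn : 1 ≤ n) :
    ∃ Q : MvPolynomial (Fin 2) K, Q.totalDegree ≤ 2 * n + 1 ∧ X 1 * X 0 ^ (4 * n - 2) - Q ∈ I := by
  rw [← mk_mem_quotTotalDegreeLE_iff, map_mul, map_pow]
  exact quotTotalDegreeLE_mono (by omega) (mul_mem_quotTotalDegreeLE
    (mk_mem_quotTotalDegreeLE (totalDegree_X 1).le)
    (mk_X_zero_pow_mem_quotTotalDegreeLE hφ hI (4 * n - 2)))

end Curve

theorem X_one_mul_X_zero_pow_sub_C_mul_X_one_pow_notMem_span {c : ℝ} (hc : c ≠ 0)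
    (k : ℕ) (q : ℝ) {m : ℕ} (hm : Even m) :
    X 1 * X 0 ^ k - C q * X 1 ^ m ∉
      Ideal.span {(X 1 ^ 2 - C c * X 0 ^ 4 : MvPolynomial (Fin 2) ℝ)} := by
  intro hmem
  obtain ⟨P, hP⟩ := Ideal.mem_span_singleton'.mp hmem
  obtain ⟨s, hs⟩ := IsAlgClosed.exists_pow_nat_eq (c : ℂ) two_pos
  have key : ∀ t : ℂ, t ^ 2 = c → t = q * t ^ m := fun t ht => by
    have := congrArg (aeval ![1, t]) hP
    simp only [map_mul, map_sub, map_pow, aeval_X, aeval_C, Matrix.cons_val_zero,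
      Matrix.cons_val_one, Matrix.cons_val_fin_one, Complex.coe_algebraMap, ht, one_pow, mul_one,
      sub_self, mul_zero] at this
    linear_combination -this
  have hs0 : s = 0 := by
    have := key (-s) (by rw [neg_sq, hs])
    rw [hm.neg_pow] at this
    linear_combination (key s hs - this) / 2
  have : (c : ℂ) = 0 := by rw [← hs, hs0]; ring
  exact hc (by exact_mod_cast this)

theorem le_totalDegree_of_X_one_mul_X_zero_pow_sub_mem {φ : Polynomial ℝ} (hφ : φ.degree = 4)
    {n : ℕ} (hn : 1 ≤ n) {Q : MvPolynomial (Fin 2) ℝ}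
    (hQ : X 1 * X 0 ^ (4 * n - 2) - Q ∈ Ideal.span {X 1 ^ 2 - Polynomial.aeval (X 0) φ}) :
    2 * n + 1 ≤ Q.totalDegree := by
  by_contra! hQd
  have hφ' := Polynomial.natDegree_eq_of_degree_eq_some hφ
  set W := weightedScale (R := ℝ) ![1, 2]
  have hmon : IsWeightedHomogeneous ![1, 2] (X 1 * X 0 ^ (4 * n - 2) : MvPolynomial (Fin 2) ℝ)
      (4 * n) := by
    convert (isWeightedHomogeneous_X ℝ ![1, 2] 1).mul
      ((isWeightedHomogeneous_X ℝ ![1, 2] 0).pow (4 * n - 2)) using 1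
    simp only [Matrix.cons_val_zero, Matrix.cons_val_one, Matrix.cons_val_fin_one, smul_eq_mul,
      mul_one]
    omega
  have hdeg : (W (X 1 * X 0 ^ (4 * n - 2) - Q)).natDegree ≤ 4 * n := by
    rw [map_sub, hmon.weightedScale_eq]
    exact (Polynomial.natDegree_sub_le _ _).trans (max_le (Polynomial.natDegree_C_mul_X_pow_le _ _)
      (natDegree_weightedScale_le fun d hd =>
        (weight_one_two_le_two_mul_totalDegree hd).trans (by omega)))
  have htop := Polynomial.coeff_mem_span_leadingCoeff_of_dvd
    (map_dvd W (Ideal.mem_span_singleton.mp hQ)) hdeg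
    ((natDegree_weightedScale_X_one_sq_sub_aeval hφ').trans_le (by omega))
  rw [leadingCoeff_weightedScale_X_one_sq_sub_aeval hφ', coeff_weightedScale, map_sub,
    hmon.weightedHomogeneousComponent_same, show 4 * n = 2 * (2 * n) by ring,
    weightedHomogeneousComponent_one_two_of_totalDegree_le (by omega)] at htop
  exact X_one_mul_X_zero_pow_sub_C_mul_X_one_pow_notMem_span
    (Polynomial.coeff_ne_zero_of_eq_degree hφ) _ _ (even_two_mul n) htop

end MvPolynomial

theorem curve_degree_y_x_pow_even_quartic_general
    (φ : Polynomial ℝ) (hφ : φ.degree = 4)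
    (n : ℕ) (hn : 1 ≤ n) :
    (∃ Q : MvPolynomial (Fin 2) ℝ, Q.totalDegree ≤ 2 * n + 1 ∧
      (MvPolynomial.X 1 : MvPolynomial (Fin 2) ℝ) *
        (MvPolynomial.X 0 : MvPolynomial (Fin 2) ℝ) ^ (4 * n - 2) - Q ∈
        Ideal.span {(MvPolynomial.X 1 : MvPolynomial (Fin 2) ℝ) ^ 2 -
          Polynomial.aeval (MvPolynomial.X 0 : MvPolynomial (Fin 2) ℝ) φ}) ∧
    (∀ Q : MvPolynomial (Fin 2) ℝ,
      (MvPolynomial.X 1 : MvPolynomial (Fin 2) ℝ) *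
        (MvPolynomial.X 0 : MvPolynomial (Fin 2) ℝ) ^ (4 * n - 2) - Q ∈
        Ideal.span {(MvPolynomial.X 1 : MvPolynomial (Fin 2) ℝ) ^ 2 -
          Polynomial.aeval (MvPolynomial.X 0 : MvPolynomial (Fin 2) ℝ) φ} →
      2 * n + 1 ≤ Q.totalDegree) :=
  ⟨exists_totalDegree_le_of_X_one_mul_X_zero_pow hφ (Ideal.mem_span_singleton_self _) hn,
    fun _ hQ => le_totalDegree_of_X_one_mul_X_zero_pow_sub_mem hφ hn hQ⟩

/-- The minimal degree of `y·x^{4n-2}` on an even quartic curve `y² = φ(x)`,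
`deg φ = 4`, `φ` even, equals `2n + 1`. -/
theorem curve_degree_y_x_pow_even_quartic
    (φ : Polynomial ℝ) (hev : φ.comp (-Polynomial.X) = φ) (hφ : φ.degree = 4)
    (n : ℕ) (hn : 1 ≤ n) :
    (∃ Q : MvPolynomial (Fin 2) ℝ, Q.totalDegree ≤ 2 * n + 1 ∧
      (MvPolynomial.X 1 : MvPolynomial (Fin 2) ℝ) *
        (MvPolynomial.X 0 : MvPolynomial (Fin 2) ℝ) ^ (4 * n - 2) - Q ∈
        Ideal.span {(MvPolynomial.X 1 : MvPolynomial (Fin 2) ℝ) ^ 2 -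
          Polynomial.aeval (MvPolynomial.X 0 : MvPolynomial (Fin 2) ℝ) φ}) ∧
    (∀ Q : MvPolynomial (Fin 2) ℝ,
      (MvPolynomial.X 1 : MvPolynomial (Fin 2) ℝ) *
        (MvPolynomial.X 0 : MvPolynomial (Fin 2) ℝ) ^ (4 * n - 2) - Q ∈
        Ideal.span {(MvPolynomial.X 1 : MvPolynomial (Fin 2) ℝ) ^ 2 -
          Polynomial.aeval (MvPolynomial.X 0 : MvPolynomial (Fin 2) ℝ) φ} →
      2 * n + 1 ≤ Q.totalDegree) :=
  curve_degree_y_x_pow_even_quartic_general φ hφ n hn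
end
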